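/- arXiv:2309.06437 — 3 statements merged into one kernel-verified Lean document; each statement's English description precedes it below -/
import Mathlib

section
/- Let d ≥ 1, let Λ ⊂ ℤ^d be finite, let ρ : ℤ^{d+1} → {−1,1} be a configuration with no overhangs, and let η : E(ℤ^{d+1}) → [0,∞) be a coupling field that is constant on E^⊥(ℤ^{d+1}). Then for each interfacial configuration σ ∈ Ω^{Λ×ℤ,ρ} there exists a configuration σ' ∈ Ω^{Λ×ℤ,ρ} with no overhangs such that H^η(σ') ≤ H^η(σ) (σ and σ' each differ from ρ, hence from each other, in finitely many points, so the energy difference is defined), and such that whenever x ∈ ℤ^{d+1} satisfies σ'_x = −1 and σ'_{x+e_{d+1}} = 1, also σ_x = −1 and σ_{x+e_{d+1}} = 1. -/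
open MeasureTheory ProbabilityTheory
open scoped ENNReal NNReal

namespace DF

/-- The base lattice `ℤ^d`. -/
abbrev Base (d : ℕ) := Fin d → ℤ

/-- The lattice `ℤ^D` with `D = d+1`, written as pairs `(v, k)`. -/
abbrev V (d : ℕ) := Base d × ℤ

/-- ℓ¹ distance on the base lattice. -/
def dist1 {d : ℕ} (u v : Base d) : ℤ := ∑ i, |u i - v i|

/-- Nearest-neighbour adjacency on the base lattice. -/
def baseAdj {d : ℕ} (u v : Base d) : Prop := dist1 u v = 1

/-- ℓ¹ distance on `ℤ^{d+1}`. -/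
def vdist {d : ℕ} (x y : V d) : ℤ := dist1 x.1 y.1 + |x.2 - y.2|

/-- Nearest-neighbour adjacency on `ℤ^{d+1}`. -/
def vAdj {d : ℕ} (x y : V d) : Prop := vdist x y = 1

/-- Edges of `ℤ^{d+1}`: unordered pairs of adjacent points. -/
def IsEdge {d : ℕ} (e : Sym2 (V d)) : Prop := ∃ x y : V d, vAdj x y ∧ e = s(x, y)

/-- Parallel edges: those in the direction of the last coordinate. -/
def IsParallel {d : ℕ} (e : Sym2 (V d)) : Prop :=
  ∃ (v : Base d) (k : ℤ), e = s((v, k), (v, k + 1))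

/-- Perpendicular edges. -/
def IsPerp {d : ℕ} (e : Sym2 (V d)) : Prop := IsEdge e ∧ ¬ IsParallel e

/-- The product `σ_x σ_y` over an unordered pair `{x,y}`. -/
def pairProd {d : ℕ} (σ : V d → ℤ) : Sym2 (V d) → ℤ :=
  Sym2.lift ⟨fun x y => σ x * σ y, fun _ _ => mul_comm _ _⟩

/-- A spin configuration takes values in `{-1, 1}`. -/
def IsConfig {d : ℕ} (σ : V d → ℤ) : Prop := ∀ x, σ x = 1 ∨ σ x = -1

/-- The energy difference `H^η(σ) − H^η(σ')`, a finite sum when `σ, σ'`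
differ in finitely many points. -/
noncomputable def energyDiff {d : ℕ} (η : Sym2 (V d) → ℝ) (σ σ' : V d → ℤ) : ℝ :=
  -∑ᶠ e ∈ {e : Sym2 (V d) | IsEdge e}, η e * ((pairProd σ e - pairProd σ' e : ℤ) : ℝ)

/-- `σ` is a ground configuration for the coupling field `η`. -/
def IsGround {d : ℕ} (η : Sym2 (V d) → ℝ) (σ : V d → ℤ) : Prop :=
  IsConfig σ ∧ ∀ σ' : V d → ℤ, IsConfig σ' → {x | σ' x ≠ σ x}.Finite →
    energyDiff η σ σ' ≤ 0

/-- `σ` is a ground configuration in `Ω^{Δ,ρ}` for the coupling field `η`. -/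
def IsGroundIn {d : ℕ} (η : Sym2 (V d) → ℝ) (Δ : Set (V d)) (ρ σ : V d → ℤ) : Prop :=
  IsConfig σ ∧ (∀ x ∉ Δ, σ x = ρ x) ∧
    ∀ σ' : V d → ℤ, IsConfig σ' → (∀ x ∉ Δ, σ' x = ρ x) → {x | σ' x ≠ σ x}.Finite →
      energyDiff η σ σ' ≤ 0

/-- Dobrushin boundary conditions. -/
def rhoDob {d : ℕ} (x : V d) : ℤ := if 1 ≤ x.2 then 1 else -1

/-- `diam` of a measure on ℝ: the least length of a compact interval of full
measure (`∞` if none exists). -/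
noncomputable def mdiam (ν : Measure ℝ) : ℝ≥0∞ :=
  sInf {w | ∃ a b : ℝ, a ≤ b ∧ ν (Set.Icc a b) = 1 ∧ w = ENNReal.ofReal (b - a)}

/-- `lip` of a measure on ℝ: the least Lipschitz constant of a nonnegative Lipschitz
map pushing the standard Gaussian forward to `ν` (`∞` if none exists). -/
noncomputable def mlip (ν : Measure ℝ) : ℝ≥0∞ :=
  sInf {w | ∃ (f : ℝ → ℝ) (K : ℝ≥0), (∀ x, 0 ≤ f x) ∧ LipschitzWith K f ∧
    (gaussianReal 0 1).map f = ν ∧ w = (K : ℝ≥0∞)}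

/-- The width of a measure on ℝ. -/
noncomputable def mwid (ν : Measure ℝ) : ℝ≥0∞ := min (mdiam ν) (mlip ν)

/-- The smallest point of the support: `max {α : ν([α,∞)) = 1}`. -/
noncomputable def minSupp (ν : Measure ℝ) : ℝ := sSup {a : ℝ | ν (Set.Ici a) = 1}

/-- The index type of edges of `ℤ^{d+1}`. -/
def EdgeT (d : ℕ) := {e : Sym2 (V d) // IsEdge e}

/-- The standard assumptions (⋆) on the pair of disorder distributions. -/
def StdAssump (νpar νperp : Measure ℝ) : Prop :=
  0 < minSupp νpar ∧ mwid νpar ≠ ⊤ ∧ (∀ x : ℝ, νpar {x} = 0) ∧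
    0 < minSupp νperp ∧ mwid νperp ≠ ⊤

/-- The quantity `κ(ν∥, ν⊥, d)`. -/
noncomputable def kappa (d : ℕ) (νpar νperp : Measure ℝ) : ℝ :=
  (1 / (minSupp νpar * minSupp νperp) + 1 / (d * (minSupp νperp) ^ 2)) *
      (mwid νpar).toReal ^ 2
    + (1 / (minSupp νperp) ^ 2) * (mwid νperp).toReal ^ 2

end DF

namespace DF

/-- A configuration is interfacial if every column is eventually `-1` below and
eventually `1` above. -/
def Interfacial {d : ℕ} (σ : V d → ℤ) : Prop :=
  ∀ v : Base d, (∃ K : ℤ, ∀ k ≤ K, σ (v, k) = -1) ∧ (∃ K : ℤ, ∀ k, K ≤ k → σ (v, k) = 1)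

/-- A configuration has no overhangs if it is interfacial and each column has a
unique sign change. -/
def NoOverhangs {d : ℕ} (σ : V d → ℤ) : Prop :=
  Interfacial σ ∧ ∀ v : Base d, ∃! k : ℤ, σ (v, k) = -σ (v, k + 1)

end DF

open DF

/-!
Among configurations that agree with `σ` off a finite box `Λ × (a, b]` and whose upward sign
changes are upward sign changes of `σ`, pick one minimising, lexicographically, the number of
disagreeing perpendicular bonds and then the number of minus spins in the box. Suppose it had a
downward sign change at height `k`, and let `Y` be the set of columns with one there. Raising
row `k + 1` on `Y` and lowering row `k` on `Y` change the number of disagreeing perpendicular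
bonds by amounts whose sum is nonpositive, so one of the two moves lowers the key. Hence the
minimiser has a single sign change in every column. Its vertical bonds are, one by one, no weaker
than those of `σ`, because its only broken ones sit at upward changes of `σ`; and as the
perpendicular couplings are all equal, its perpendicular energy is an affine function of the
disagreement count, which is at most that of `σ`.
-/

open Finset

lemma Finset.sum_add_eq_sum_add_of_eq_off {α M : Type*} [AddCommMonoid M] {s : Finset α}
    {r : α} {f g : α → M} (hr : r ∈ s) (h : ∀ k ∈ s, k ≠ r → f k = g k) :
    ∑ k ∈ s, f k + g r = ∑ k ∈ s, g k + f r := by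
  classical
  rw [← add_sum_erase s f hr, ← add_sum_erase s g hr,
    sum_congr rfl fun k hk => h k (mem_of_mem_erase hk) (ne_of_mem_erase hk)]
  abel

namespace DF

variable {d : ℕ}

section Edges

-- An edge is indexed by its endpoint `x` and the positive direction `o` leading to the other
-- endpoint, `none` being the vertical direction.
def step : Option (Fin d) → V d
  | none => (0, 1)
  | some i => (Pi.single i 1, 0)

def edgeAt (x : V d) (o : Option (Fin d)) : Sym2 (V d) := s(x, x + step o)

@[simp] lemma add_step_none (x : V d) : x + step none = (x.1, x.2 + 1) := by
  ext <;> simp [step]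

@[simp] lemma mk_add_step_some (v : Base d) (k : ℤ) (i : Fin d) :
    (v, k) + step (some i) = (v + Pi.single i 1, k) := by
  simp [step]

lemma step_nonneg (o : Option (Fin d)) : 0 ≤ step o := by
  cases o <;> simp [step, Prod.le_def, Pi.single_nonneg]

lemma step_ne_zero (o : Option (Fin d)) : step o ≠ 0 := by
  cases o <;> simp [step]

lemma step_injective : Function.Injective (step (d := d)) := by
  rintro (_ | i) (_ | j) h <;> simp only [step, Prod.mk.injEq] at h
  · rfl
  · simp at h
  · simp at h
  · by_contra hij
    simpa [Pi.single_apply, Ne.symm (Option.some_injective _ |>.ne_iff.1 hij)] using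
      congrFun h.1 j

lemma edgeAt_injective :
    Function.Injective fun p : V d × Option (Fin d) => edgeAt p.1 p.2 := by
  rintro ⟨x, o⟩ ⟨y, o'⟩ h
  rcases Sym2.eq_iff.1 h with ⟨hxy, hstep⟩ | ⟨hx, hy⟩
  · dsimp only at hxy hstep
    subst hxy
    rw [step_injective (add_left_cancel hstep)]
  · dsimp only at hx hy
    have hsum : step o' + step o = 0 := by
      rw [hx, add_assoc] at hy
      simpa using hy
    have := ((add_eq_zero_iff_of_nonneg (step_nonneg o') (step_nonneg o)).1 hsum).2
    exact (step_ne_zero o this).elim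

lemma vdist_add_step (x : V d) (o : Option (Fin d)) : vdist x (x + step o) = 1 := by
  cases o <;> simp [vdist, dist1, step, Pi.single_apply, apply_ite (|·|)]

lemma eq_pi_single_of_sum_abs_eq_one {u : Fin d → ℤ} (h : ∑ j, |u j| = 1) :
    ∃ i, u = Pi.single i 1 ∨ u = -Pi.single i 1 := by
  obtain ⟨i, hi⟩ : ∃ i, u i ≠ 0 := by
    by_contra! h0
    simp [h0] at h
  have hsplit := add_sum_erase univ (fun j => |u j|) (mem_univ i)
  have hrest_nonneg : 0 ≤ ∑ j ∈ univ.erase i, |u j| := sum_nonneg fun j _ => abs_nonneg _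
  have hui : |u i| = 1 := by
    have := Int.one_le_abs hi
    omega
  have hrest : ∀ j ≠ i, u j = 0 := fun j hj => abs_eq_zero.1 <|
    (sum_eq_zero_iff_of_nonneg fun j _ => abs_nonneg (u j)).1 (by omega) j
      (mem_erase.2 ⟨hj, mem_univ j⟩)
  refine ⟨i, ?_⟩
  rcases abs_eq zero_le_one |>.1 hui with h1 | h1
  · left; ext j; by_cases hj : j = i <;> simp_all
  · right; ext j; by_cases hj : j = i <;> simp_all

lemma exists_step_of_vAdj {x y : V d} (h : vAdj x y) :
    ∃ o, y = x + step o ∨ x = y + step o := by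
  obtain ⟨u, k⟩ := x
  obtain ⟨w, l⟩ := y
  simp only [vAdj, vdist, dist1] at h
  have hnn : 0 ≤ ∑ i, |u i - w i| := sum_nonneg fun i _ => abs_nonneg _
  by_cases hkl : k = l
  · subst hkl
    obtain ⟨i, hi | hi⟩ :=
      eq_pi_single_of_sum_abs_eq_one (u := w - u) (by simpa [abs_sub_comm] using h)
    · exact ⟨some i, Or.inl (by simp [step, ← hi])⟩
    · rw [← neg_sub u w, neg_inj] at hi
      exact ⟨some i, Or.inr (by simp [step, ← sub_eq_iff_eq_add', hi])⟩
  · have hkl' : |k - l| = 1 := by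
      have := Int.one_le_abs (sub_ne_zero.2 hkl)
      omega
    have huw : u = w := funext fun i => sub_eq_zero.1 <| abs_eq_zero.1 <|
      (sum_eq_zero_iff_of_nonneg fun i _ => abs_nonneg (u i - w i)).1 (by omega) i (mem_univ i)
    subst huw
    refine ⟨none, ?_⟩
    rcases abs_eq zero_le_one |>.1 hkl' with h1 | h1
    · right; simp [step]; omega
    · left; simp [step]; omega

lemma isEdge_iff {e : Sym2 (V d)} : IsEdge e ↔ ∃ x o, edgeAt x o = e := by
  constructor
  · rintro ⟨x, y, hxy, rfl⟩
    obtain ⟨o, rfl | rfl⟩ := exists_step_of_vAdj hxy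
    · exact ⟨x, o, rfl⟩
    · exact ⟨y, o, Sym2.eq_swap⟩
  · rintro ⟨x, o, rfl⟩
    exact ⟨x, x + step o, vdist_add_step x o, rfl⟩

lemma isPerp_edgeAt_some (x : V d) (i : Fin d) : IsPerp (edgeAt x (some i)) := by
  refine ⟨isEdge_iff.2 ⟨x, some i, rfl⟩, ?_⟩
  rintro ⟨v, k, h⟩
  have h' : edgeAt x (some i) = edgeAt (v, k) none := by
    rw [h]
    simp [edgeAt, step]
  simpa using @edgeAt_injective d (x, some i) ((v, k), none) h'

lemma pairProd_edgeAt (τ : V d → ℤ) (x : V d) (o : Option (Fin d)) :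
    pairProd τ (edgeAt x o) = τ x * τ (x + step o) := rfl

lemma energyDiff_eq_sum (η : Sym2 (V d) → ℝ) (τ σ : V d → ℤ) (W : Finset (V d))
    (hW : ∀ x ∉ W, ∀ o, pairProd τ (edgeAt x o) = pairProd σ (edgeAt x o)) :
    energyDiff η τ σ = -∑ x ∈ W, ∑ o, η (edgeAt x o) *
      ((pairProd τ (edgeAt x o) - pairProd σ (edgeAt x o) : ℤ) : ℝ) := by
  have hrange : {e : Sym2 (V d) | IsEdge e}
      = Set.range fun p : V d × Option (Fin d) => edgeAt p.1 p.2 := by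
    ext e
    simp [isEdge_iff]
  rw [energyDiff, hrange, finsum_mem_range edgeAt_injective,
    finsum_eq_sum_of_support_subset (s := W ×ˢ univ), sum_product]
  rintro ⟨x, o⟩ hx
  by_contra hxW
  simp [hW x (by simpa using hxW) o] at hx

end Edges

section Column

variable {c : ℤ → ℤ}

lemma exists_upChange_of_le (hc : ∀ k, c k = 1 ∨ c k = -1) {m n : ℤ} (hmn : m ≤ n)
    (hm : c m = -1) (hn : c n = 1) : ∃ k, c k = -1 ∧ c (k + 1) = 1 := by
  induction n, hmn using Int.leInduction with
  | base => omega
  | succ n _ ih =>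
    rcases hc n with h | h
    · exact ih h
    · exact ⟨n, h, hn⟩

lemma eq_one_of_le_of_noDownChange (hc : ∀ k, c k = 1 ∨ c k = -1)
    (hnd : ∀ k, ¬(c k = 1 ∧ c (k + 1) = -1)) {m n : ℤ} (hmn : m ≤ n) (hm : c m = 1) :
    c n = 1 := by
  induction n, hmn using Int.leInduction with
  | base => exact hm
  | succ n _ ih => exact (hc (n + 1)).resolve_right fun h => hnd n ⟨ih, h⟩

lemma existsUnique_signChange_of_noDownChange (hc : ∀ k, c k = 1 ∨ c k = -1)
    (hnd : ∀ k, ¬(c k = 1 ∧ c (k + 1) = -1)) {m n : ℤ} (hm : c m = -1) (hn : c n = 1) :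
    ∃! k, c k = -c (k + 1) := by
  have hmn : m ≤ n := by
    by_contra! h
    have := eq_one_of_le_of_noDownChange hc hnd h.le hn
    omega
  have hup : ∀ k, c k = -c (k + 1) → c k = -1 ∧ c (k + 1) = 1 := fun k hk => by
    rcases hc k with h | h <;> rcases hc (k + 1) with h' | h' <;> simp_all
  obtain ⟨k, hk, hk'⟩ := exists_upChange_of_le hc hmn hm hn
  refine ⟨k, show c k = -c (k + 1) by rw [hk, hk'], fun l hl => ?_⟩
  have hl' := hup l hl
  by_contra hlk
  rcases lt_or_gt_of_ne hlk with h | h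
  · have := eq_one_of_le_of_noDownChange hc hnd (show l + 1 ≤ k by omega) hl'.2
    omega
  · have := eq_one_of_le_of_noDownChange hc hnd (show k + 1 ≤ l by omega) hk'
    omega

lemma noDownChange_of_existsUnique_signChange (hc : ∀ k, c k = 1 ∨ c k = -1)
    (hu : ∃! k, c k = -c (k + 1)) {m n : ℤ} (hmn : m ≤ n) (hm : c m = -1) (hn : c n = 1)
    (k : ℤ) : ¬(c k = 1 ∧ c (k + 1) = -1) := by
  rintro ⟨h, h'⟩
  obtain ⟨l, hl, hl'⟩ := exists_upChange_of_le hc hmn hm hn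
  have hkl : k = l := hu.unique (by rw [h, h', neg_neg]) (by rw [hl, hl'])
  rw [hkl, hl] at h
  omega

end Column

def IsUpChange (τ : V d → ℤ) (x : V d) : Prop := τ x = -1 ∧ τ (x.1, x.2 + 1) = 1

def IsDownChange (τ : V d → ℤ) (x : V d) : Prop := τ x = 1 ∧ τ (x.1, x.2 + 1) = -1

lemma Interfacial.exists_bounds {σ : V d → ℤ} (hσ : Interfacial σ) (Λ : Finset (Base d)) :
    ∃ a b : ℤ, (∀ v ∈ Λ, ∀ k ≤ a, σ (v, k) = -1) ∧ ∀ v ∈ Λ, ∀ k, b ≤ k → σ (v, k) = 1 := by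
  choose K hK using fun v => (hσ v).1
  choose K' hK' using fun v => (hσ v).2
  obtain ⟨a, ha⟩ := (Λ.image K).bddBelow
  obtain ⟨b, hb⟩ := (Λ.image K').bddAbove
  exact ⟨a, b, fun v hv k hk => hK v k (hk.trans (ha (mem_image_of_mem K hv))),
    fun v hv k hk => hK' v k ((hb (mem_image_of_mem K' hv)).trans hk)⟩

lemma noOverhangs_of_forall_not_isDownChange {τ : V d → ℤ} (hτ : IsConfig τ)
    (hi : Interfacial τ) (hnd : ∀ x, ¬IsDownChange τ x) : NoOverhangs τ := by
  refine ⟨hi, fun v => ?_⟩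
  obtain ⟨⟨K, hK⟩, ⟨K', hK'⟩⟩ := hi v
  exact existsUnique_signChange_of_noDownChange (fun k => hτ (v, k)) (fun k => hnd (v, k))
    (hK K le_rfl) (hK' K' le_rfl)

lemma mul_above_le_of_not_isDownChange {σ τ : V d → ℤ} (hσ : IsConfig σ) (hτ : IsConfig τ)
    {x : V d} (hnd : ¬IsDownChange τ x) (hup : IsUpChange τ x → IsUpChange σ x) :
    σ x * σ (x.1, x.2 + 1) ≤ τ x * τ (x.1, x.2 + 1) := by
  simp only [IsUpChange, IsDownChange] at hnd hup
  rcases hσ x with h1 | h1 <;> rcases hσ (x.1, x.2 + 1) with h2 | h2 <;>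
    rcases hτ x with h3 | h3 <;> rcases hτ (x.1, x.2 + 1) with h4 | h4 <;> simp_all

section Counts

def disagree (τ : V d → ℤ) (x y : V d) : ℕ := if τ x = τ y then 0 else 1

def perpDisagreements (W : Finset (V d)) (τ : V d → ℤ) : ℕ :=
  ∑ x ∈ W, ∑ i, disagree τ x (x + step (some i))

def minusCount (D : Finset (V d)) (τ : V d → ℤ) : ℕ := #{x ∈ D | τ x = -1}

lemma mul_eq_one_sub_two_mul_disagree {τ : V d → ℤ} (hτ : IsConfig τ) (x y : V d) :
    τ x * τ y = 1 - 2 * (disagree τ x y : ℤ) := by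
  rcases hτ x with h | h <;> rcases hτ y with h' | h' <;> simp [disagree, h, h']

lemma sum_pairProd_edgeAt_some_sub {σ τ : V d → ℤ} (hσ : IsConfig σ) (hτ : IsConfig τ)
    (W : Finset (V d)) :
    ∑ x ∈ W, ∑ i, (pairProd τ (edgeAt x (some i)) - pairProd σ (edgeAt x (some i)))
      = 2 * ((perpDisagreements W σ : ℤ) - perpDisagreements W τ) := by
  simp only [pairProd_edgeAt, mul_eq_one_sub_two_mul_disagree hσ,
    mul_eq_one_sub_two_mul_disagree hτ, perpDisagreements]
  push_cast
  simp only [mul_sub, mul_sum, ← sum_sub_distrib]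
  exact sum_congr rfl fun x _ => sum_congr rfl fun i _ => by ring

lemma perpDisagreements_add_row {Λ' : Finset (Base d)} {a b r : ℤ} (hr : r ∈ Icc a b)
    {τ τ' : V d → ℤ} (h : ∀ x : V d, x.2 ≠ r → τ' x = τ x) :
    perpDisagreements (Λ' ×ˢ Icc a b) τ'
        + ∑ v ∈ Λ', ∑ i, disagree τ (v, r) (v + Pi.single i 1, r)
      = perpDisagreements (Λ' ×ˢ Icc a b) τ
        + ∑ v ∈ Λ', ∑ i, disagree τ' (v, r) (v + Pi.single i 1, r) := by
  simp only [perpDisagreements, sum_product, mk_add_step_some, ← sum_add_distrib]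
  refine sum_congr rfl fun v _ => sum_add_eq_sum_add_of_eq_off
    (f := fun k => ∑ i, disagree τ' (v, k) (v + Pi.single i 1, k))
    (g := fun k => ∑ i, disagree τ (v, k) (v + Pi.single i 1, k)) hr fun k _ hk => ?_
  simp [disagree, h (v, k) hk, h (v + Pi.single _ 1, k) hk]

end Counts

section RowMoves

def setRow (Y : Finset (Base d)) (k s : ℤ) (τ : V d → ℤ) (x : V d) : ℤ :=
  if x.1 ∈ Y ∧ x.2 = k then s else τ x

lemma setRow_of_ne {Y : Finset (Base d)} {k s : ℤ} {τ : V d → ℤ} {x : V d} (hx : x.2 ≠ k) :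
    setRow Y k s τ x = τ x := by
  simp [setRow, hx]

lemma minusCount_setRow_one_lt {D : Finset (V d)} {Y : Finset (Base d)} {r : ℤ}
    {τ : V d → ℤ} {u : Base d} (hu : u ∈ Y) (hD : (u, r) ∈ D) (hτ : τ (u, r) = -1) :
    minusCount D (setRow Y r 1 τ) < minusCount D τ := by
  unfold minusCount
  refine card_lt_card ((ssubset_iff_of_subset fun x hx => ?_).2 ⟨(u, r), ?_, ?_⟩)
  · obtain ⟨hxD, hx⟩ := mem_filter.1 hx
    refine mem_filter.2 ⟨hxD, ?_⟩
    unfold setRow at hx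
    split_ifs at hx
    exact hx
  · exact mem_filter.2 ⟨hD, hτ⟩
  · intro h
    have := (mem_filter.1 h).2
    simp [setRow, hu] at this

lemma disagree_setRow_add_le {τ : V d → ℤ} (hτ : IsConfig τ) {Y : Finset (Base d)} {k : ℤ}
    (hY : ∀ u, u ∈ Y ↔ IsDownChange τ (u, k)) (v q : Base d) :
    disagree (setRow Y k (-1) τ) (v, k) (q, k)
        + disagree (setRow Y (k + 1) 1 τ) (v, k + 1) (q, k + 1)
      ≤ disagree τ (v, k) (q, k) + disagree τ (v, k + 1) (q, k + 1) := by
  have hv := hY v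
  have hq := hY q
  simp only [IsDownChange] at hv hq
  rcases hτ (v, k) with h1 | h1 <;> rcases hτ (v, k + 1) with h2 | h2 <;>
    rcases hτ (q, k) with h3 | h3 <;> rcases hτ (q, k + 1) with h4 | h4 <;>
    simp_all [disagree, setRow]

lemma perpDisagreements_setRow_add_le {τ : V d → ℤ} (hτ : IsConfig τ) {Y : Finset (Base d)}
    {k : ℤ} (hY : ∀ u, u ∈ Y ↔ IsDownChange τ (u, k)) {Λ' : Finset (Base d)} {a b : ℤ}
    (hk : k ∈ Icc a b) (hk' : k + 1 ∈ Icc a b) :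
    perpDisagreements (Λ' ×ˢ Icc a b) (setRow Y (k + 1) 1 τ)
        + perpDisagreements (Λ' ×ˢ Icc a b) (setRow Y k (-1) τ)
      ≤ 2 * perpDisagreements (Λ' ×ˢ Icc a b) τ := by
  have hZ := perpDisagreements_add_row (Λ' := Λ') hk' (τ' := setRow Y (k + 1) 1 τ)
    fun _ hx => setRow_of_ne hx
  have hW := perpDisagreements_add_row (Λ' := Λ') hk (τ' := setRow Y k (-1) τ)
    fun _ hx => setRow_of_ne hx
  have hrows : ∑ v ∈ Λ', ∑ i, disagree (setRow Y k (-1) τ) (v, k) (v + Pi.single i 1, k)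
        + ∑ v ∈ Λ', ∑ i,
            disagree (setRow Y (k + 1) 1 τ) (v, k + 1) (v + Pi.single i 1, k + 1)
      ≤ ∑ v ∈ Λ', ∑ i, disagree τ (v, k) (v + Pi.single i 1, k)
        + ∑ v ∈ Λ', ∑ i, disagree τ (v, k + 1) (v + Pi.single i 1, k + 1) := by
    simp only [← sum_add_distrib]
    exact sum_le_sum fun v _ => sum_le_sum fun i _ => disagree_setRow_add_le hτ hY v _
  omega

end RowMoves

section Box

noncomputable def box (Λ : Finset (Base d)) (a b : ℤ) : Finset (V d) := Λ ×ˢ Ioc a b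

noncomputable def nbhd (Λ : Finset (Base d)) : Finset (Base d) :=
  Λ ∪ univ.biUnion fun i => Λ.image (· - Pi.single i 1)

-- A product with `Icc a b`, so that `perpDisagreements` over it splits into rows.
noncomputable def window (Λ : Finset (Base d)) (a b : ℤ) : Finset (V d) := nbhd Λ ×ˢ Icc a b

lemma box_subset_window (Λ : Finset (Base d)) (a b : ℤ) : box Λ a b ⊆ window Λ a b := by
  intro x hx
  simp only [box, window, nbhd, mem_product, mem_Ioc, mem_Icc, mem_union] at hx ⊢
  exact ⟨Or.inl hx.1, hx.2.1.le, hx.2.2⟩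

lemma mem_window_of_add_step_mem_box {Λ : Finset (Base d)} {a b : ℤ} {x : V d}
    {o : Option (Fin d)} (hx : x + step o ∈ box Λ a b) : x ∈ window Λ a b := by
  obtain ⟨v, k⟩ := x
  cases o with
  | none =>
    simp only [window, nbhd, box, mem_product, mem_union, mem_Icc, mem_Ioc,
      add_step_none] at hx ⊢
    exact ⟨Or.inl hx.1, by omega, by omega⟩
  | some i =>
    simp only [window, nbhd, box, mem_product, mem_union, mem_biUnion, mem_image, mem_univ,
      true_and, mem_Icc, mk_add_step_some, mem_Ioc] at hx ⊢
    exact ⟨Or.inr ⟨i, _, hx.1, add_sub_cancel_right v _⟩, hx.2.1.le, hx.2.2⟩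

structure Admissible (Λ : Finset (Base d)) (a b : ℤ) (σ τ : V d → ℤ) : Prop where
  isConfig : IsConfig τ
  eq_of_notMem_box : ∀ x ∉ box Λ a b, τ x = σ x
  isUpChange : ∀ x, IsUpChange τ x → IsUpChange σ x

variable {Λ : Finset (Base d)} {a b : ℤ} {σ τ : V d → ℤ}

lemma admissible_self (hσ : IsConfig σ) : Admissible Λ a b σ σ :=
  ⟨hσ, fun _ _ => rfl, fun _ h => h⟩

lemma Admissible.interfacial (hτ : Admissible Λ a b σ τ) (hσ : Interfacial σ) :
    Interfacial τ := by
  intro v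
  obtain ⟨⟨K, hK⟩, ⟨K', hK'⟩⟩ := hσ v
  have hoff : ∀ k, (k ≤ a ∨ b < k) → τ (v, k) = σ (v, k) := fun k hk =>
    hτ.eq_of_notMem_box _ (by simp only [box, mem_product, mem_Ioc]; omega)
  exact ⟨⟨min K a, fun k hk => (hoff k (by omega)).trans (hK k (by omega))⟩,
    ⟨max K' (b + 1), fun k hk => (hoff k (by omega)).trans (hK' k (by omega))⟩⟩

lemma Admissible.setRow_raise (hτ : Admissible Λ a b σ τ) {Y : Finset (Base d)} {k : ℤ}
    (hY : ∀ u ∈ Y, (u, k + 1) ∈ box Λ a b ∧ τ (u, k) = 1) :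
    Admissible Λ a b σ (setRow Y (k + 1) 1 τ) where
  isConfig x := by unfold setRow; split_ifs <;> simp [hτ.isConfig x]
  eq_of_notMem_box := by
    rintro ⟨u, l⟩ hx
    rw [setRow, if_neg, hτ.eq_of_notMem_box _ hx]
    rintro ⟨hu, rfl⟩
    exact hx (hY u hu).1
  isUpChange := by
    rintro ⟨u, l⟩ hx
    apply hτ.isUpChange
    simp only [IsUpChange, setRow] at hx ⊢
    split_ifs at hx <;> simp_all

lemma Admissible.setRow_lower (hτ : Admissible Λ a b σ τ) {Y : Finset (Base d)} {k : ℤ}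
    (hY : ∀ u ∈ Y, (u, k) ∈ box Λ a b ∧ τ (u, k + 1) = -1) :
    Admissible Λ a b σ (setRow Y k (-1) τ) where
  isConfig x := by unfold setRow; split_ifs <;> simp [hτ.isConfig x]
  eq_of_notMem_box := by
    rintro ⟨u, l⟩ hx
    rw [setRow, if_neg, hτ.eq_of_notMem_box _ hx]
    rintro ⟨hu, rfl⟩
    exact hx (hY u hu).1
  isUpChange := by
    rintro ⟨u, l⟩ hx
    apply hτ.isUpChange
    simp only [IsUpChange, setRow] at hx ⊢
    split_ifs at hx <;> simp_all

lemma Admissible.energyDiff_nonpos (hτ : Admissible Λ a b σ τ) (hσ : IsConfig σ)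
    {η : Sym2 (V d) → ℝ} (hη : ∀ e, 0 ≤ η e)
    (hconst : ∀ e e' : Sym2 (V d), IsPerp e → IsPerp e' → η e = η e')
    (hE : perpDisagreements (window Λ a b) τ ≤ perpDisagreements (window Λ a b) σ)
    (hnd : ∀ x, ¬IsDownChange τ x) :
    energyDiff η τ σ ≤ 0 := by
  have hW : ∀ x ∉ window Λ a b, ∀ o, pairProd τ (edgeAt x o) = pairProd σ (edgeAt x o) :=
    fun x hx o => by
      rw [pairProd_edgeAt, pairProd_edgeAt,
        hτ.eq_of_notMem_box x fun h => hx (box_subset_window _ _ _ h),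
        hτ.eq_of_notMem_box _ fun h => hx (mem_window_of_add_step_mem_box h)]
  rw [energyDiff_eq_sum η τ σ _ hW, neg_nonpos]
  simp only [Fintype.sum_option, sum_add_distrib]
  refine add_nonneg (sum_nonneg fun x _ => mul_nonneg (hη _) ?_) ?_
  · rw [pairProd_edgeAt, pairProd_edgeAt, add_step_none]
    exact_mod_cast sub_nonneg.2 <|
      mul_above_le_of_not_isDownChange hσ hτ.isConfig (hnd x) (hτ.isUpChange x)
  rcases isEmpty_or_nonempty (Fin d) with _ | ⟨⟨i₀⟩⟩
  · simp
  have hJ : ∀ x i, η (edgeAt x (some i)) = η (edgeAt 0 (some i₀)) := fun x i =>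
    hconst _ _ (isPerp_edgeAt_some x i) (isPerp_edgeAt_some 0 i₀)
  simp only [hJ, ← mul_sum]
  refine mul_nonneg (hη _) ?_
  have hsum := sum_pairProd_edgeAt_some_sub hσ hτ.isConfig (window Λ a b)
  have hsum_nonneg : (0 : ℤ) ≤ 2 * ((perpDisagreements (window Λ a b) σ : ℤ)
      - perpDisagreements (window Λ a b) τ) := by
    omega
  rw [← hsum] at hsum_nonneg
  exact_mod_cast hsum_nonneg

end Box

section Descent

noncomputable def energyKey (Λ : Finset (Base d)) (a b : ℤ) (τ : V d → ℤ) : ℕ ×ₗ ℕ :=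
  toLex (perpDisagreements (window Λ a b) τ, minusCount (box Λ a b) τ)

variable {Λ : Finset (Base d)} {a b : ℤ} {σ τ : V d → ℤ}
  (hlow : ∀ v ∈ Λ, ∀ k ≤ a, σ (v, k) = -1) (hhigh : ∀ v ∈ Λ, ∀ k, b ≤ k → σ (v, k) = 1)
  (hout : ∀ x : V d, x.1 ∉ Λ → ¬IsDownChange σ x)
include hlow hhigh hout

lemma Admissible.mem_box_of_isDownChange (hτ : Admissible Λ a b σ τ) {x : V d}
    (hx : IsDownChange τ x) : x ∈ box Λ a b ∧ (x.1, x.2 + 1) ∈ box Λ a b := by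
  obtain ⟨v, k⟩ := x
  have hτσ : ∀ l, (v, l) ∉ box Λ a b → τ (v, l) = σ (v, l) := fun l => hτ.eq_of_notMem_box _
  have hv : v ∈ Λ := by
    by_contra hv
    have hoff : ∀ l, (v, l) ∉ box Λ a b := fun l h => hv (mem_product.1 h).1
    exact hout (v, k) hv (by simpa only [IsDownChange, ← hτσ _ (hoff _)] using hx)
  have hak : a < k := by
    by_contra! hk
    have h1 := hτσ k (by simp [box, hk])
    have h2 := hlow v hv k hk
    have h3 : τ (v, k) = 1 := hx.1
    omega
  have hkb : k + 1 ≤ b := by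
    by_contra! hk
    have h1 := hτσ (k + 1) (by simp [box]; omega)
    have h2 := hhigh v hv (k + 1) hk.le
    have h3 : τ (v, k + 1) = -1 := hx.2
    omega
  simp only [box, mem_product, mem_Ioc, hv, true_and]
  omega

lemma Admissible.exists_energyKey_lt (hτ : Admissible Λ a b σ τ) {x : V d}
    (hx : IsDownChange τ x) :
    ∃ τ', Admissible Λ a b σ τ' ∧ energyKey Λ a b τ' < energyKey Λ a b τ := by
  classical
  obtain ⟨v, k⟩ := x
  have hdown {x : V d} (h : IsDownChange τ x) := hτ.mem_box_of_isDownChange hlow hhigh hout h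
  set Y := Λ.filter fun u => IsDownChange τ (u, k)
  have hY : ∀ u, u ∈ Y ↔ IsDownChange τ (u, k) := fun u =>
    ⟨fun h => (mem_filter.1 h).2, fun h => mem_filter.2 ⟨(mem_product.1 (hdown h).1).1, h⟩⟩
  have hrows : k ∈ Icc a b ∧ k + 1 ∈ Icc a b := by
    have := hdown hx
    simp only [box, mem_product, mem_Ioc] at this
    simp only [mem_Icc]
    omega
  have hsum := perpDisagreements_setRow_add_le hτ.isConfig hY (Λ' := nbhd Λ) hrows.1 hrows.2
  by_cases hW : perpDisagreements (window Λ a b) (setRow Y k (-1) τ)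
      < perpDisagreements (window Λ a b) τ
  · refine ⟨_, hτ.setRow_lower fun u hu => ⟨(hdown ((hY u).1 hu)).1, ((hY u).1 hu).2⟩, ?_⟩
    exact Prod.Lex.toLex_lt_toLex'.2 ⟨hW.le, fun h => absurd h hW.ne⟩
  · refine ⟨_, hτ.setRow_raise fun u hu => ⟨(hdown ((hY u).1 hu)).2, ((hY u).1 hu).1⟩, ?_⟩
    refine Prod.Lex.toLex_lt_toLex'.2 ⟨by simp only [window] at hW ⊢; omega, fun _ => ?_⟩
    exact minusCount_setRow_one_lt ((hY v).2 hx) (hdown hx).2 hx.2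

lemma exists_admissible_forall_not_isDownChange (hσ : IsConfig σ) :
    ∃ τ, Admissible Λ a b σ τ ∧
      perpDisagreements (window Λ a b) τ ≤ perpDisagreements (window Λ a b) σ ∧
      ∀ x, ¬IsDownChange τ x := by
  have hσ' : σ ∈ {τ | Admissible Λ a b σ τ} := admissible_self hσ
  set τ := Function.argminOn (energyKey Λ a b) _ ⟨σ, hσ'⟩
  have hτ : Admissible Λ a b σ τ := Function.argminOn_mem _ _ _
  have hle : energyKey Λ a b τ ≤ energyKey Λ a b σ := Function.argminOn_le _ _ hσ'
  refine ⟨τ, hτ, (Prod.Lex.toLex_le_toLex'.1 hle).1, fun x hx => ?_⟩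
  obtain ⟨τ', hτ', hlt⟩ := hτ.exists_energyKey_lt hlow hhigh hout hx
  exact Function.not_lt_argminOn _ _ hτ' hlt

end Descent

end DF

theorem no_overhangs_of_constant_perpendicular_field_general
    (d : ℕ) (Λ : Finset (Base d))
    (ρ : V d → ℤ) (hρ : NoOverhangs ρ)
    (η : Sym2 (V d) → ℝ) (hη : ∀ e, 0 ≤ η e)
    (hconst : ∀ e e' : Sym2 (V d), IsPerp e → IsPerp e' → η e = η e')
    (σ : V d → ℤ) (hσc : IsConfig σ) (hσb : ∀ x : V d, x.1 ∉ Λ → σ x = ρ x)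
    (hσi : Interfacial σ) :
    ∃ σ' : V d → ℤ, IsConfig σ' ∧ (∀ x : V d, x.1 ∉ Λ → σ' x = ρ x) ∧
      NoOverhangs σ' ∧
      energyDiff η σ' σ ≤ 0 ∧
      ∀ x : V d, σ' x = -1 → σ' (x.1, x.2 + 1) = 1 →
        σ x = -1 ∧ σ (x.1, x.2 + 1) = 1 := by
  obtain ⟨a, b, hlow, hhigh⟩ := hσi.exists_bounds Λ
  have hout : ∀ x : V d, x.1 ∉ Λ → ¬IsDownChange σ x := by
    rintro ⟨v, k⟩ hv
    have hσρ : ∀ l, σ (v, l) = ρ (v, l) := fun l => hσb (v, l) hv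
    have hu : ∃! l, σ (v, l) = -σ (v, l + 1) := by simpa only [← hσρ] using hρ.2 v
    obtain ⟨⟨K, hK⟩, ⟨K', hK'⟩⟩ := hσi v
    exact noDownChange_of_existsUnique_signChange (fun l => hσc (v, l)) hu
      (min_le_max (a := K) (b := K')) (hK _ (min_le_left _ _)) (hK' _ (le_max_right _ _)) k
  obtain ⟨τ, hτ, hE, hnd⟩ := exists_admissible_forall_not_isDownChange hlow hhigh hout hσc
  refine ⟨τ, hτ.isConfig, fun x hx => ?_,
    noOverhangs_of_forall_not_isDownChange hτ.isConfig (hτ.interfacial hσi) hnd,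
    hτ.energyDiff_nonpos hσc hη hconst hE hnd, fun x h1 h2 => hτ.isUpChange x ⟨h1, h2⟩⟩
  rw [hτ.eq_of_notMem_box x fun h => hx (mem_product.1 h).1, hσb x hx]

/-- If the coupling field is constant on perpendicular edges, then for
every interfacial configuration `σ ∈ Ω^{Λ×ℤ,ρ}` (with `ρ` having no overhangs) there
is a configuration `σ' ∈ Ω^{Λ×ℤ,ρ}` with no overhangs, of no larger energy, whose
upward sign changes are upward sign changes of `σ`. -/
theorem no_overhangs_of_constant_perpendicular_field
    (d : ℕ) (hd : 1 ≤ d) (Λ : Finset (Base d))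
    (ρ : V d → ℤ) (hρc : IsConfig ρ) (hρ : NoOverhangs ρ)
    (η : Sym2 (V d) → ℝ) (hη : ∀ e, 0 ≤ η e)
    (hconst : ∀ e e' : Sym2 (V d), IsPerp e → IsPerp e' → η e = η e')
    (σ : V d → ℤ) (hσc : IsConfig σ) (hσb : ∀ x : V d, x.1 ∉ Λ → σ x = ρ x)
    (hσi : Interfacial σ) :
    ∃ σ' : V d → ℤ, IsConfig σ' ∧ (∀ x : V d, x.1 ∉ Λ → σ' x = ρ x) ∧
      NoOverhangs σ' ∧
      energyDiff η σ' σ ≤ 0 ∧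
      ∀ x : V d, σ' x = -1 → σ' (x.1, x.2 + 1) = 1 →
        σ x = -1 ∧ σ (x.1, x.2 + 1) = 1 :=
  no_overhangs_of_constant_perpendicular_field_general d Λ ρ hρ η hη hconst σ hσc hσb hσi
end

section
/- Let d ≥ 1, let Λ ⊂ ℤ^d be finite, let ρ : ℤ^{d+1} → {−1,1} be a configuration with no overhangs, and let σ ∈ Ω^{Λ×ℤ,ρ} be interfacial. Then there exists an interfacial configuration σ' ∈ Ω^{Λ×ℤ,ρ} with no overhangs such that: (i) whenever σ'_{(v,k)} = −1 and σ'_{(v,k+1)} = 1, also σ_{(v,k)} = −1 and σ_{(v,k+1)} = 1; and (ii) the number of edges {x,y} ∈ E^⊥(ℤ^{d+1}) with {x,y} ∩ (Λ×ℤ) ≠ ∅ and σ'_x ≠ σ'_y is at most the number of edges {x,y} ∈ E^⊥(ℤ^{d+1}) with {x,y} ∩ (Λ×ℤ) ≠ ∅ and σ_x ≠ σ_y (both numbers being finite). -/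
open MeasureTheory ProbabilityTheory
open scoped ENNReal NNReal

namespace DF

/-- The set of perpendicular edges meeting `Λ × ℤ` across which `σ` disagrees. -/
def perpDis {d : ℕ} (Λ : Finset (Base d)) (σ : V d → ℤ) : Set (Sym2 (V d)) :=
  {e | IsPerp e ∧ (∃ x ∈ e, x.1 ∈ Λ) ∧ ∃ x y : V d, e = s(x, y) ∧ σ x ≠ σ y}

end DF

open DF

/-!
A configuration has no overhangs exactly when its columns are interfacial and monotone. While some
column of `τ` has a down-step (`+1` at height `K`, `-1` at `K + 1`), replace level `K` by the
pointwise minimum of levels `K` and `K + 1`, or level `K + 1` by their maximum; neither move creates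
up-steps. The perpendicular disagreement edges at one height are the cut edges of a level set, and
cuts are submodular, so one of the two moves does not increase their number. If the minimum does
not, it strictly shrinks the set of `+1`s lying below a `-1`; otherwise the maximum strictly
decreases the number of disagreement edges. So the procedure terminates, with monotone columns.
-/

namespace DF

section Column

variable {c : ℤ → ℤ}

theorem exists_upStep_of_le (hc : ∀ k, c k = 1 ∨ c k = -1) {a b : ℤ} (hab : a ≤ b)
    (ha : c a = -1) (hb : c b = 1) : ∃ j, a ≤ j ∧ j < b ∧ c j = -1 ∧ c (j + 1) = 1 := by
  induction b, hab using Int.leInduction with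
  | base => omega
  | succ b hab ih =>
    rcases hc b with hb' | hb'
    · obtain ⟨j, hj⟩ := ih hb'
      exact ⟨j, by omega⟩
    · exact ⟨b, hab, by omega, hb', hb⟩

theorem existsUnique_signChange_of_monotone (hc : ∀ k, c k = 1 ∨ c k = -1) (hm : Monotone c)
    {a b : ℤ} (ha : c a = -1) (hb : c b = 1) : ∃! k, c k = -c (k + 1) := by
  have hab : a ≤ b := by
    by_contra! h
    have := hm h.le
    omega
  obtain ⟨j, -, -, hj, hj1⟩ := exists_upStep_of_le hc hab ha hb
  refine ⟨j, by omega, fun k hk => ?_⟩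
  have := hc k
  have := hm (show k ≤ k + 1 by omega)
  rcases lt_trichotomy k j with h | h | h
  · have := hm (show k + 1 ≤ j by omega)
    omega
  · exact h
  · have := hm (show j + 1 ≤ k by omega)
    omega

theorem monotone_of_existsUnique_signChange (hc : ∀ k, c k = 1 ∨ c k = -1)
    (hu : ∃! k, c k = -c (k + 1)) (hhi : ∃ K, ∀ k, K ≤ k → c k = 1) : Monotone c := by
  refine monotone_int_of_le_succ fun k => ?_
  by_contra hdown
  have hk : c k = 1 ∧ c (k + 1) = -1 := by
    have := hc k
    have := hc (k + 1)
    omega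
  obtain ⟨K, hK⟩ := hhi
  -- a down-step at `k` forces a second sign change, an up-step above `k + 1`
  obtain ⟨j, hkj, -, hj, hj1⟩ :=
    exists_upStep_of_le hc (le_max_right K (k + 1)) hk.2 (hK _ (le_max_left _ _))
  have := hu.unique (y₁ := j) (y₂ := k) (by omega) (by omega)
  omega

end Column

variable {d : ℕ}

theorem monotone_column_of_noOverhangs {ρ : V d → ℤ} (hc : IsConfig ρ) (h : NoOverhangs ρ)
    (v : Base d) : Monotone fun k => ρ (v, k) :=
  monotone_of_existsUnique_signChange (fun k => hc (v, k)) (h.2 v) (h.1 v).2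

theorem noOverhangs_of_monotone {τ : V d → ℤ} (hc : IsConfig τ) (hi : Interfacial τ)
    (hm : ∀ v, Monotone fun k => τ (v, k)) : NoOverhangs τ := by
  refine ⟨hi, fun v => ?_⟩
  obtain ⟨⟨a, ha⟩, ⟨b, hb⟩⟩ := hi v
  exact existsUnique_signChange_of_monotone (fun k => hc (v, k)) (hm v) (ha a le_rfl)
    (hb b le_rfl)

def upSteps (τ : V d → ℤ) : Set (V d) := {x | τ x = -1 ∧ τ (x.1, x.2 + 1) = 1}

def setLevel (K : ℤ) (f : Base d → ℤ) (τ : V d → ℤ) : V d → ℤ :=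
  fun x => if x.2 = K then f x.1 else τ x

theorem setLevel_of_ne {K k : ℤ} (f : Base d → ℤ) (τ : V d → ℤ) (v : Base d) (h : k ≠ K) :
    setLevel K f τ (v, k) = τ (v, k) :=
  if_neg h

theorem Interfacial.setLevel {τ : V d → ℤ} (hi : Interfacial τ) (K : ℤ) (f : Base d → ℤ) :
    Interfacial (setLevel K f τ) := by
  intro v
  obtain ⟨⟨a, ha⟩, ⟨b, hb⟩⟩ := hi v
  refine ⟨⟨min a (K - 1), fun k hk => ?_⟩, ⟨max b (K + 1), fun k hk => ?_⟩⟩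
  · rw [setLevel_of_ne f τ v (by omega)]
    exact ha k (by omega)
  · rw [setLevel_of_ne f τ v (by omega)]
    exact hb k (by omega)

/- The two ways of removing the down-steps (`+1` at height `K`, `-1` at `K + 1`) between levels
`K` and `K + 1`: lower level `K`, or raise level `K + 1`. -/
def levelInf (K : ℤ) (τ : V d → ℤ) : V d → ℤ :=
  setLevel K (fun v => min (τ (v, K)) (τ (v, K + 1))) τ

def levelSup (K : ℤ) (τ : V d → ℤ) : V d → ℤ :=
  setLevel (K + 1) (fun v => max (τ (v, K)) (τ (v, K + 1))) τ

section Moves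

variable {τ : V d → ℤ}

theorem IsConfig.levelInf (hc : IsConfig τ) (K : ℤ) : IsConfig (levelInf K τ) := by
  intro x
  have := hc (x.1, K)
  have := hc (x.1, K + 1)
  have := hc x
  simp only [DF.levelInf, setLevel]
  split_ifs <;> omega

theorem IsConfig.levelSup (hc : IsConfig τ) (K : ℤ) : IsConfig (levelSup K τ) := by
  intro x
  have := hc (x.1, K)
  have := hc (x.1, K + 1)
  have := hc x
  simp only [DF.levelSup, setLevel]
  split_ifs <;> omega

theorem levelInf_eq_of_monotone {v : Base d} (hm : Monotone fun k => τ (v, k)) (K k : ℤ) :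
    levelInf K τ (v, k) = τ (v, k) := by
  simp only [levelInf, setLevel]
  split_ifs with h
  · subst h
    exact min_eq_left (hm (Int.le_add_one le_rfl))
  · rfl

theorem levelSup_eq_of_monotone {v : Base d} (hm : Monotone fun k => τ (v, k)) (K k : ℤ) :
    levelSup K τ (v, k) = τ (v, k) := by
  simp only [levelSup, setLevel]
  split_ifs with h
  · subst h
    exact max_eq_right (hm (Int.le_add_one le_rfl))
  · rfl

theorem upSteps_levelInf_subset (hc : IsConfig τ) (K : ℤ) :
    upSteps (levelInf K τ) ⊆ upSteps τ := by
  rintro ⟨v, k⟩ ⟨h₁, h₂⟩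
  show τ (v, k) = -1 ∧ τ (v, k + 1) = 1
  have := hc (v, K)
  have := hc (v, K + 1)
  simp only [levelInf, setLevel] at h₁ h₂
  split_ifs at h₁ h₂ <;> subst_vars <;> constructor <;> omega

theorem upSteps_levelSup_subset (hc : IsConfig τ) (K : ℤ) :
    upSteps (levelSup K τ) ⊆ upSteps τ := by
  rintro ⟨v, k⟩ ⟨h₁, h₂⟩
  show τ (v, k) = -1 ∧ τ (v, k + 1) = 1
  have := hc (v, K)
  have := hc (v, K + 1)
  simp only [levelSup, setLevel, add_left_inj] at h₁ h₂
  split_ifs at h₁ h₂ <;> subst_vars <;> constructor <;> omega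

end Moves

def invertedSites (Λ : Finset (Base d)) (τ : V d → ℤ) : Set (V d) :=
  {x | x.1 ∈ Λ ∧ τ x = 1 ∧ ∃ j, x.2 < j ∧ τ (x.1, j) = -1}

theorem invertedSites_finite (Λ : Finset (Base d)) {τ : V d → ℤ} (hi : Interfacial τ) :
    (invertedSites Λ τ).Finite := by
  have hcol : ∀ v, {k | τ (v, k) = 1 ∧ ∃ j, k < j ∧ τ (v, j) = -1}.Finite := by
    intro v
    obtain ⟨⟨a, ha⟩, ⟨b, hb⟩⟩ := hi v
    refine (Set.finite_Icc a b).subset fun k ⟨hk, j, hkj, hj⟩ => ⟨?_, ?_⟩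
    · by_contra! h
      have := ha k h.le
      omega
    · by_contra! h
      have := hb j (by omega)
      omega
  refine (Λ.finite_toSet.biUnion fun v _ => (Set.finite_singleton v).prod (hcol v)).subset ?_
  rintro ⟨v, k⟩ ⟨hv, hk⟩
  exact Set.mem_biUnion hv ⟨rfl, hk⟩

theorem invertedSites_levelInf_ssubset {Λ : Finset (Base d)} {τ : V d → ℤ} (hc : IsConfig τ)
    {v : Base d} {K : ℤ} (hv : v ∈ Λ) (hK : τ (v, K) = 1) (hK1 : τ (v, K + 1) = -1) :
    invertedSites Λ (levelInf K τ) ⊂ invertedSites Λ τ := by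
  refine (Set.ssubset_iff_of_subset ?_).2 ⟨(v, K), ⟨hv, hK, K + 1, by omega, hK1⟩, ?_⟩
  · rintro ⟨w, k⟩ ⟨hw, hk, j, hkj, hj⟩
    dsimp only at hkj
    have hle : levelInf K τ (w, k) ≤ τ (w, k) := by
      simp only [levelInf, setLevel]
      split_ifs with h
      · exact h ▸ min_le_left _ _
      · exact le_rfl
    have hminus : τ (w, j) = -1 ∨ τ (w, j + 1) = -1 := by
      simp only [levelInf, setLevel] at hj
      split_ifs at hj with h
      · subst h
        omega
      · exact Or.inl hj
    refine ⟨hw, by have := hc (w, k); omega, ?_⟩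
    rcases hminus with h | h
    exacts [⟨j, hkj, h⟩, ⟨j + 1, by omega, h⟩]
  · rintro ⟨-, h, -⟩
    have : levelInf K τ (v, K) = min (τ (v, K)) (τ (v, K + 1)) := if_pos rfl
    omega

section Separates

variable {α : Type*}

def Separates (f : α → ℤ) (e : Sym2 α) : Prop := ∃ x y, e = s(x, y) ∧ f x ≠ f y

@[simp]
theorem separates_mk {f : α → ℤ} {x y : α} : Separates f s(x, y) ↔ f x ≠ f y := by
  refine ⟨fun ⟨a, b, hab, hne⟩ => ?_, fun h => ⟨x, y, rfl, h⟩⟩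
  rcases Sym2.eq_iff.1 hab with ⟨rfl, rfl⟩ | ⟨rfl, rfl⟩
  exacts [hne, hne.symm]

theorem ncard_separates_min_add_max_le {E : Set (Sym2 α)} (hE : E.Finite) {f g : α → ℤ}
    (hf : ∀ x, f x = 1 ∨ f x = -1) (hg : ∀ x, g x = 1 ∨ g x = -1) :
    {e ∈ E | Separates (fun x => min (f x) (g x)) e}.ncard +
        {e ∈ E | Separates (fun x => max (f x) (g x)) e}.ncard ≤
      {e ∈ E | Separates f e}.ncard + {e ∈ E | Separates g e}.ncard := by
  have hor : ∀ e, Separates (fun x => min (f x) (g x)) e ∨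
      Separates (fun x => max (f x) (g x)) e → Separates f e ∨ Separates g e := by
    intro e
    induction e using Sym2.ind with | _ x y => ?_
    simp only [separates_mk]
    omega
  have hand : ∀ e, Separates (fun x => min (f x) (g x)) e ∧
      Separates (fun x => max (f x) (g x)) e → Separates f e ∧ Separates g e := by
    intro e
    induction e using Sym2.ind with | _ x y => ?_
    simp only [separates_mk]
    have := hf x; have := hf y; have := hg x; have := hg y
    omega
  have hfin : ∀ P : Sym2 α → Prop, {e ∈ E | P e}.Finite := fun P => hE.sep P
  calc _ = {e ∈ E | Separates (fun x => min (f x) (g x)) e ∨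
          Separates (fun x => max (f x) (g x)) e}.ncard +
        {e ∈ E | Separates (fun x => min (f x) (g x)) e ∧
          Separates (fun x => max (f x) (g x)) e}.ncard := by
        rw [Set.sep_or, Set.sep_and, Set.ncard_union_add_ncard_inter _ _ (hfin _) (hfin _)]
    _ ≤ {e ∈ E | Separates f e ∨ Separates g e}.ncard +
          {e ∈ E | Separates f e ∧ Separates g e}.ncard :=
        add_le_add (Set.ncard_le_ncard (fun e ⟨he, h⟩ => ⟨he, hor e h⟩) (hfin _))
          (Set.ncard_le_ncard (fun e ⟨he, h⟩ => ⟨he, hand e h⟩) (hfin _))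
    _ = _ := by
        rw [Set.sep_or, Set.sep_and, Set.ncard_union_add_ncard_inter _ _ (hfin _) (hfin _)]

end Separates

section Edges

theorem dist1_eq_zero {u w : Base d} (h : dist1 u w = 0) : u = w := by
  funext i
  have := (Finset.sum_eq_zero_iff_of_nonneg fun j _ => abs_nonneg (u j - w j)).1 h i
    (Finset.mem_univ i)
  rw [abs_eq_zero, sub_eq_zero] at this
  exact this

theorem baseAdj_comm {u w : Base d} : baseAdj u w ↔ baseAdj w u := by
  simp only [baseAdj, dist1, abs_sub_comm]

theorem mem_Icc_of_baseAdj {u w : Base d} (h : baseAdj u w) : w ∈ Set.Icc (u - 1) (u + 1) := by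
  have hle : ∀ i, |u i - w i| ≤ 1 := fun i =>
    h ▸ Finset.single_le_sum (fun j _ => abs_nonneg (u j - w j)) (Finset.mem_univ i)
  refine ⟨fun i => ?_, fun i => ?_⟩ <;> simp only [Pi.sub_apply, Pi.add_apply, Pi.one_apply] <;>
    have := abs_le.1 (hle i) <;> omega

theorem isPerp_iff {e : Sym2 (V d)} : IsPerp e ↔ ∃ u w k, baseAdj u w ∧ e = s((u, k), (w, k)) := by
  constructor
  · rintro ⟨⟨⟨u, k⟩, ⟨w, j⟩, hadj, rfl⟩, hpar⟩
    have hdist : dist1 u w + |k - j| = 1 := hadj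
    have hnonneg : 0 ≤ dist1 u w := Finset.sum_nonneg fun i _ => abs_nonneg _
    by_cases hkj : k = j
    · subst hkj
      exact ⟨u, w, k, by simpa [baseAdj] using hdist, rfl⟩
    have huw : dist1 u w = 0 := by
      have := abs_pos.2 (sub_ne_zero.2 hkj)
      omega
    obtain rfl := dist1_eq_zero huw
    rcases abs_choice (k - j) with h | h
    · exact (hpar ⟨u, j, by rw [show k = j + 1 by omega, Sym2.eq_swap]⟩).elim
    · exact (hpar ⟨u, k, by rw [show j = k + 1 by omega]⟩).elim
  · rintro ⟨u, w, k, huw, rfl⟩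
    refine ⟨⟨(u, k), (w, k), by simpa [vAdj, vdist, baseAdj] using huw, rfl⟩, fun ⟨v, j, he⟩ => ?_⟩
    simp only [Sym2.eq_iff, Prod.mk.injEq] at he
    omega

def baseEdges (Λ : Finset (Base d)) : Set (Sym2 (Base d)) :=
  {e | (∃ u w, baseAdj u w ∧ e = s(u, w)) ∧ ∃ v ∈ e, v ∈ Λ}

theorem baseEdges_finite (Λ : Finset (Base d)) : (baseEdges Λ).Finite := by
  set N := ⋃ v ∈ Λ, Set.Icc (v - 1) (v + 1)
  have hN : N.Finite := Λ.finite_toSet.biUnion fun v _ => Set.finite_Icc _ _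
  refine Set.Finite.subset ((hN.prod hN).image fun p : Base d × Base d => s(p.1, p.2)) ?_
  rintro _ ⟨⟨u, w, huw, rfl⟩, v, hv, hvΛ⟩
  have hmem : ∀ x : Base d, x ∈ Set.Icc (x - 1) (x + 1) := fun x =>
    ⟨sub_le_self x zero_le_one, le_add_of_nonneg_right zero_le_one⟩
  refine ⟨(u, w), ?_, rfl⟩
  rcases Sym2.mem_iff.1 hv with rfl | rfl
  · exact ⟨Set.mem_biUnion hvΛ (hmem v), Set.mem_biUnion hvΛ (mem_Icc_of_baseAdj huw)⟩
  · exact ⟨Set.mem_biUnion hvΛ (mem_Icc_of_baseAdj (baseAdj_comm.1 huw)),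
      Set.mem_biUnion hvΛ (hmem v)⟩

def cutEdges (Λ : Finset (Base d)) (τ : V d → ℤ) : Set (Sym2 (Base d) × ℤ) :=
  {p | p.1 ∈ baseEdges Λ ∧ Separates (fun v => τ (v, p.2)) p.1}

def atLevel (p : Sym2 (Base d) × ℤ) : Sym2 (V d) := p.1.map (·, p.2)

theorem atLevel_injective : Function.Injective (atLevel (d := d)) := by
  rintro ⟨e, k⟩ ⟨e', k'⟩ h
  have hmem : (e.out.1, k) ∈ atLevel (e', k') := h ▸ Sym2.mem_map.2 ⟨_, Sym2.out_fst_mem e, rfl⟩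
  obtain ⟨_, -, hk⟩ := Sym2.mem_map.1 hmem
  obtain rfl : k' = k := congrArg Prod.snd hk
  exact Prod.ext (Sym2.map.injective (fun _ _ h => congrArg Prod.fst h) h) rfl

theorem perpDis_eq_image (Λ : Finset (Base d)) (τ : V d → ℤ) :
    perpDis Λ τ = atLevel '' cutEdges Λ τ := by
  ext e
  constructor
  · rintro ⟨hperp, ⟨x, hx, hxΛ⟩, hsep⟩
    obtain ⟨u, w, k, huw, rfl⟩ := isPerp_iff.1 hperp
    have hsep' : Separates τ s((u, k), (w, k)) := hsep
    refine ⟨(s(u, w), k), ⟨⟨⟨u, w, huw, rfl⟩, x.1, ?_, hxΛ⟩, by simpa using hsep'⟩, rfl⟩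
    rcases Sym2.mem_iff.1 hx with rfl | rfl <;> simp
  · rintro ⟨⟨_, k⟩, ⟨⟨⟨u, w, huw, rfl⟩, v, hv, hvΛ⟩, hsep⟩, rfl⟩
    refine ⟨isPerp_iff.2 ⟨u, w, k, huw, rfl⟩, ⟨(v, k), Sym2.mem_map.2 ⟨v, hv, rfl⟩, hvΛ⟩, ?_⟩
    show Separates τ _
    simpa [atLevel] using hsep

theorem Interfacial.finite_setOf_ne {τ : V d → ℤ} (hi : Interfacial τ) (u w : Base d) :
    {k | τ (u, k) ≠ τ (w, k)}.Finite := by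
  obtain ⟨⟨a, ha⟩, ⟨b, hb⟩⟩ := hi u
  obtain ⟨⟨a', ha'⟩, ⟨b', hb'⟩⟩ := hi w
  refine (Set.finite_Icc (min a a') (max b b')).subset fun k hk => ⟨?_, ?_⟩
  · by_contra! h
    exact hk ((ha k (by omega)).trans (ha' k (by omega)).symm)
  · by_contra! h
    exact hk ((hb k (by omega)).trans (hb' k (by omega)).symm)

theorem cutEdges_finite (Λ : Finset (Base d)) {τ : V d → ℤ} (hi : Interfacial τ) :
    (cutEdges Λ τ).Finite := by
  have hlev : ∀ e : Sym2 (Base d), {k | Separates (fun v => τ (v, k)) e}.Finite := by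
    intro e
    induction e using Sym2.ind with | _ u w => simpa using hi.finite_setOf_ne u w
  refine ((baseEdges_finite Λ).biUnion fun e _ => (Set.finite_singleton e).prod (hlev e)).subset ?_
  rintro ⟨e, k⟩ ⟨he, hs⟩
  exact Set.mem_biUnion he ⟨rfl, hs⟩

theorem perpDis_finite (Λ : Finset (Base d)) {τ : V d → ℤ} (hi : Interfacial τ) :
    (perpDis Λ τ).Finite := by
  rw [perpDis_eq_image]
  exact (cutEdges_finite Λ hi).image _

theorem ncard_perpDis (Λ : Finset (Base d)) (τ : V d → ℤ) :
    (perpDis Λ τ).ncard = (cutEdges Λ τ).ncard := by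
  rw [perpDis_eq_image, Set.ncard_image_of_injective _ atLevel_injective]

end Edges

section Count

variable (Λ : Finset (Base d))

theorem ncard_cutEdges_eq_add {τ : V d → ℤ} (hi : Interfacial τ) (K : ℤ) :
    (cutEdges Λ τ).ncard = {e ∈ baseEdges Λ | Separates (fun v => τ (v, K)) e}.ncard +
      (cutEdges Λ τ \ {p | p.2 = K}).ncard := by
  have hlevel : cutEdges Λ τ ∩ {p | p.2 = K} =
      (·, K) '' {e ∈ baseEdges Λ | Separates (fun v => τ (v, K)) e} := by
    ext ⟨e, k⟩
    constructor
    · rintro ⟨he, rfl : k = K⟩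
      exact ⟨e, he, rfl⟩
    · rintro ⟨e, he, ⟨⟩⟩
      exact ⟨he, rfl⟩
  rw [← Set.ncard_inter_add_ncard_sdiff_eq_ncard _ {p | p.2 = K} (cutEdges_finite Λ hi), hlevel,
    Set.ncard_image_of_injective _ (Prod.mk_left_injective K)]

theorem cutEdges_setLevel_diff (K : ℤ) (f : Base d → ℤ) (τ : V d → ℤ) :
    cutEdges Λ (setLevel K f τ) \ {p | p.2 = K} = cutEdges Λ τ \ {p | p.2 = K} := by
  ext ⟨e, k⟩
  refine and_congr_left fun hk => ?_
  have hslice : (fun v => setLevel K f τ (v, k)) = fun v => τ (v, k) :=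
    funext fun v => setLevel_of_ne f τ v hk
  simp only [cutEdges, Set.mem_ofPred_eq, hslice]

theorem setLevel_slice (K : ℤ) (f : Base d → ℤ) (τ : V d → ℤ) :
    (fun v => setLevel K f τ (v, K)) = f :=
  funext fun _ => if_pos rfl

theorem ncard_cutEdges_levelInf_add_levelSup_le {τ : V d → ℤ} (hc : IsConfig τ)
    (hi : Interfacial τ) (K : ℤ) :
    (cutEdges Λ (levelInf K τ)).ncard + (cutEdges Λ (levelSup K τ)).ncard ≤
      2 * (cutEdges Λ τ).ncard := by
  have hinf := ncard_cutEdges_eq_add Λ (hi.setLevel K fun v => min (τ (v, K)) (τ (v, K + 1))) K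
  have hsup := ncard_cutEdges_eq_add Λ
    (hi.setLevel (K + 1) fun v => max (τ (v, K)) (τ (v, K + 1))) (K + 1)
  rw [setLevel_slice, cutEdges_setLevel_diff] at hinf hsup
  have h₁ := ncard_cutEdges_eq_add Λ hi K
  have h₂ := ncard_cutEdges_eq_add Λ hi (K + 1)
  have hsub := ncard_separates_min_add_max_le (baseEdges_finite Λ) (f := fun v => τ (v, K))
    (g := fun v => τ (v, K + 1)) (fun _ => hc _) (fun _ => hc _)
  unfold levelInf levelSup
  omega

end Count

section Descent

variable {Λ : Finset (Base d)} {τ : V d → ℤ}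

theorem exists_downStep (hc : IsConfig τ) (hout : ∀ v ∉ Λ, Monotone fun k => τ (v, k))
    (hm : ¬ ∀ v, Monotone fun k => τ (v, k)) :
    ∃ v ∈ Λ, ∃ K, τ (v, K) = 1 ∧ τ (v, K + 1) = -1 := by
  obtain ⟨v, hv⟩ := not_forall.1 hm
  refine ⟨v, by_contra fun h => hv (hout v h), ?_⟩
  by_contra! h
  refine hv (monotone_int_of_le_succ fun k => ?_)
  have := h k
  have := hc (v, k)
  have := hc (v, k + 1)
  omega

/-- By submodularity `levelInf` and `levelSup` cannot both increase the number of cut edges, and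
`levelInf` always removes an inverted site. -/
theorem exists_lex_decreasing_move (hc : IsConfig τ) (hi : Interfacial τ)
    (hout : ∀ v ∉ Λ, Monotone fun k => τ (v, k)) (hm : ¬ ∀ v, Monotone fun k => τ (v, k)) :
    ∃ τ₁, IsConfig τ₁ ∧ Interfacial τ₁ ∧ (∀ x : V d, x.1 ∉ Λ → τ₁ x = τ x) ∧
      upSteps τ₁ ⊆ upSteps τ ∧
      Prod.Lex (· < ·) (· < ·) ((cutEdges Λ τ₁).ncard, (invertedSites Λ τ₁).ncard)
        ((cutEdges Λ τ).ncard, (invertedSites Λ τ).ncard) := by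
  obtain ⟨v, hv, K, hK, hK1⟩ := exists_downStep hc hout hm
  have hsum := ncard_cutEdges_levelInf_add_levelSup_le Λ hc hi K
  by_cases hinf : (cutEdges Λ (levelInf K τ)).ncard ≤ (cutEdges Λ τ).ncard
  · have hlt := Set.ncard_lt_ncard (invertedSites_levelInf_ssubset hc hv hK hK1)
      (invertedSites_finite Λ hi)
    refine ⟨levelInf K τ, hc.levelInf K, hi.setLevel _ _,
      fun x hx => levelInf_eq_of_monotone (hout _ hx) _ _, upSteps_levelInf_subset hc K,
      Prod.lex_def.2 ?_⟩
    omega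
  · exact ⟨levelSup K τ, hc.levelSup K, hi.setLevel _ _,
      fun x hx => levelSup_eq_of_monotone (hout _ hx) _ _, upSteps_levelSup_subset hc K,
      Prod.Lex.left _ _ (by omega)⟩

theorem exists_monotone_columns (τ : V d → ℤ) (hc : IsConfig τ) (hi : Interfacial τ)
    (hout : ∀ v ∉ Λ, Monotone fun k => τ (v, k)) :
    ∃ τ', IsConfig τ' ∧ Interfacial τ' ∧ (∀ v, Monotone fun k => τ' (v, k)) ∧
      (∀ x : V d, x.1 ∉ Λ → τ' x = τ x) ∧ upSteps τ' ⊆ upSteps τ ∧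
      (cutEdges Λ τ').ncard ≤ (cutEdges Λ τ).ncard := by
  by_cases hm : ∀ v, Monotone fun k => τ (v, k)
  · exact ⟨τ, hc, hi, hm, fun _ _ => rfl, subset_rfl, le_rfl⟩
  obtain ⟨τ₁, hc₁, hi₁, hout₁, hup₁, hlt⟩ := exists_lex_decreasing_move hc hi hout hm
  have hout₁' : ∀ v ∉ Λ, Monotone fun k => τ₁ (v, k) := fun v hv =>
    (funext fun k => hout₁ (v, k) hv : (fun k => τ₁ (v, k)) = _) ▸ hout v hv
  obtain ⟨τ', hc', hi', hm', hout', hup', hle'⟩ := exists_monotone_columns τ₁ hc₁ hi₁ hout₁'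
  refine ⟨τ', hc', hi', hm', fun x hx => (hout' x hx).trans (hout₁ x hx), hup'.trans hup₁,
    hle'.trans ?_⟩
  rcases Prod.lex_def.1 hlt with h | ⟨h, -⟩
  exacts [h.le, h.le]
termination_by ((cutEdges Λ τ).ncard, (invertedSites Λ τ).ncard)
decreasing_by exact hlt

end Descent

end DF

theorem no_overhangs_with_perpendicular_count_general
    (d : ℕ) (Λ : Finset (Base d))
    (ρ : V d → ℤ) (hρc : IsConfig ρ) (hρ : NoOverhangs ρ)
    (σ : V d → ℤ) (hσc : IsConfig σ) (hσb : ∀ x : V d, x.1 ∉ Λ → σ x = ρ x)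
    (hσi : Interfacial σ) :
    ∃ σ' : V d → ℤ, IsConfig σ' ∧ (∀ x : V d, x.1 ∉ Λ → σ' x = ρ x) ∧
      NoOverhangs σ' ∧
      (∀ v : Base d, ∀ k : ℤ, σ' (v, k) = -1 → σ' (v, k + 1) = 1 →
        σ (v, k) = -1 ∧ σ (v, k + 1) = 1) ∧
      (perpDis Λ σ').Finite ∧ (perpDis Λ σ).Finite ∧
      (perpDis Λ σ').ncard ≤ (perpDis Λ σ).ncard := by
  have hout : ∀ v ∉ Λ, Monotone fun k => σ (v, k) := fun v hv =>
    (funext fun k => hσb (v, k) hv : (fun k => σ (v, k)) = _) ▸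
      monotone_column_of_noOverhangs hρc hρ v
  obtain ⟨σ', hc, hi, hm, hσ'σ, hup, hle⟩ := exists_monotone_columns σ hσc hσi hout
  refine ⟨σ', hc, fun x hx => (hσ'σ x hx).trans (hσb x hx), noOverhangs_of_monotone hc hi hm,
    fun v k h₁ h₂ => hup ⟨h₁, h₂⟩, perpDis_finite Λ hi, perpDis_finite Λ hσi, ?_⟩
  rw [ncard_perpDis, ncard_perpDis]
  exact hle

/-- For every interfacial `σ ∈ Ω^{Λ×ℤ,ρ}` (with `ρ` having no
overhangs) there is a configuration `σ' ∈ Ω^{Λ×ℤ,ρ}` with no overhangs whose upward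
sign changes are upward sign changes of `σ`, and whose number of perpendicular
disagreement edges meeting `Λ×ℤ` (a finite number) is at most that of `σ`. -/
theorem no_overhangs_with_perpendicular_count
    (d : ℕ) (hd : 1 ≤ d) (Λ : Finset (Base d))
    (ρ : V d → ℤ) (hρc : IsConfig ρ) (hρ : NoOverhangs ρ)
    (σ : V d → ℤ) (hσc : IsConfig σ) (hσb : ∀ x : V d, x.1 ∉ Λ → σ x = ρ x)
    (hσi : Interfacial σ) :
    ∃ σ' : V d → ℤ, IsConfig σ' ∧ (∀ x : V d, x.1 ∉ Λ → σ' x = ρ x) ∧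
      NoOverhangs σ' ∧
      (∀ v : Base d, ∀ k : ℤ, σ' (v, k) = -1 → σ' (v, k + 1) = 1 →
        σ (v, k) = -1 ∧ σ (v, k + 1) = 1) ∧
      (perpDis Λ σ').Finite ∧ (perpDis Λ σ).Finite ∧
      (perpDis Λ σ').ncard ≤ (perpDis Λ σ).ncard :=
  no_overhangs_with_perpendicular_count_general d Λ ρ hρc hρ σ hσc hσb hσi
end

section
/- Let d ≥ 2. For every shift τ : ℤ^d → ℤ, TV(τ) ≥ 2d·(Σ_{u∈ℤ^d} |τ(u)|)^{1−1/d}. -/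
namespace DF

/-- Edges of the base lattice `ℤ^d`: unordered pairs at ℓ¹-distance 1. -/
def IsBaseEdge {d : ℕ} (e : Sym2 (Base d)) : Prop :=
  ∃ u v : Base d, baseAdj u v ∧ e = s(u, v)

/-- `|τ u − τ v|` over an unordered pair. -/
def pairAbsDiff {d : ℕ} (τ : Base d → ℤ) : Sym2 (Base d) → ℤ :=
  Sym2.lift ⟨fun u v => |τ u - τ v|, fun _ _ => abs_sub_comm _ _⟩

/-- A shift: a finitely supported `τ : ℤ^d → ℤ`. -/
def IsShift {d : ℕ} (τ : Base d → ℤ) : Prop := {v | τ v ≠ 0}.Finite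

/-- Total variation of a shift: the sum of `|τ u − τ v|` over all edges. -/
noncomputable def TV {d : ℕ} (τ : Base d → ℤ) : ℤ :=
  ∑ᶠ e ∈ {e : Sym2 (Base d) | IsBaseEdge e}, pairAbsDiff τ e

/-- Total variation of `τ` restricted to edges with both endpoints in `A`. -/
noncomputable def TVon {d : ℕ} (τ : Base d → ℤ) (A : Set (Base d)) : ℤ :=
  ∑ᶠ e ∈ {e : Sym2 (Base d) | IsBaseEdge e ∧ ∀ x ∈ e, x ∈ A}, pairAbsDiff τ e

/-- The discrete cube `Q_N(c) = c + {0,1,…,N−1}^d` as a finset. -/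
noncomputable def cubeFinset {d : ℕ} (N : ℕ) (c : Base d) : Finset (Base d) :=
  Fintype.piFinset fun i => Finset.Ico (c i) (c i + (N : ℤ))

/-- The base point `N·⌊u/N⌋` of the cube of side `N` containing `u`. -/
def cubePt {d : ℕ} (N : ℕ) (u : Base d) : Base d := fun i => N * Int.fdiv (u i) N

/-- The average `τ^rough_N(u)` of `τ` over the cube of the partition `𝒫_N`
containing `u`. -/
noncomputable def roughAvg {d : ℕ} (N : ℕ) (τ : Base d → ℤ) (u : Base d) : ℝ :=
  (∑ w ∈ cubeFinset N (cubePt N u), (τ w : ℝ)) / (N : ℝ) ^ d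

/-- The integer nearest to `a`, with the convention `[k + 1/2] = k`. -/
noncomputable def nearestInt (a : ℝ) : ℤ := ⌈a - 1 / 2⌉

/-- The coarse graining `τ_N`. -/
noncomputable def coarse {d : ℕ} (N : ℕ) (τ : Base d → ℤ) (u : Base d) : ℤ :=
  nearestInt (roughAvg N τ u)

end DF

open DF

/-!
Slicing `τ` at the half-integers `t + 1/2` between `0` and `τ u` writes `τ` as a signed sum of
indicators of finite sets `L_t` (the layers), with `∑ u, |τ u| = ∑ t, |L_t|` and
`TV τ = ∑ t, TV 𝟙_{L_t}`, because an edge `{u, v}` is cut by exactly `|τ u - τ v|` layers.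

For a finite set `A`, every line parallel to `e_i` that meets `A` carries at least two boundary
edges of `A` (leaving its top and its bottom point), so `TV 𝟙_A ≥ 2 ∑ i, |π_i A|`, where `π_i`
forgets the `i`-th coordinate. The Loomis–Whitney inequality `|A|^(d-1) ≤ ∏ i, |π_i A|`, proved by
induction on the number of coordinates with Hölder's inequality over the slices `{u i = t}`, and
AM–GM give `∑ i, |π_i A| ≥ d |A|^(1-1/d)`. Summing over the layers, the subadditivity of
`x ↦ x^(1-1/d)` concludes.
-/

open Finset Function
open scoped ENNReal

theorem ENNReal.sum_prod_rpow_le_prod_sum_rpow {ι κ : Type*} (s : Finset ι) (T : Finset κ)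
    (g : ι → κ → ℝ≥0∞) {p : ι → ℝ} (hp : ∑ j ∈ s, p j = 1) (hp₀ : ∀ j ∈ s, 0 ≤ p j) :
    ∑ t ∈ T, ∏ j ∈ s, g j t ^ p j ≤ ∏ j ∈ s, (∑ t ∈ T, g j t) ^ p j := by
  let _ : MeasurableSpace T := ⊤
  have : MeasurableSingletonClass T := ⟨fun _ => trivial⟩
  have key := ENNReal.lintegral_prod_norm_pow_le (μ := MeasureTheory.Measure.count) s
    (f := fun j (t : T) => g j t) (fun _ _ => (measurable_from_top).aemeasurable) hp hp₀
  simp only [MeasureTheory.lintegral_count, tsum_fintype] at key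
  rw [sum_coe_sort T (fun t => ∏ j ∈ s, g j t ^ p j)] at key
  simpa only [sum_coe_sort] using key

/-- Hölder's inequality with all exponents equal to `1 / #s`, cleared of fractional powers. -/
theorem pow_card_sum_le_mul_prod_sum {ι κ : Type*} {s : Finset ι} (hs : s.Nonempty) (T : Finset κ)
    {a : κ → ℕ} {c : ι → κ → ℕ} {P : ℕ} (h : ∀ t ∈ T, a t ^ #s ≤ P * ∏ j ∈ s, c j t) :
    (∑ t ∈ T, a t) ^ #s ≤ P * ∏ j ∈ s, ∑ t ∈ T, c j t := by
  have hk : (0 : ℝ) < #s := by exact_mod_cast hs.card_pos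
  set α : ℝ := (#s : ℝ)⁻¹
  have hα : 0 ≤ α := by positivity
  have hterm : ∀ t ∈ T, (a t : ℝ≥0∞) ≤ (P : ℝ≥0∞) ^ α * ∏ j ∈ s, (c j t : ℝ≥0∞) ^ α := by
    intro t ht
    rw [ENNReal.prod_rpow_of_nonneg hα, ← ENNReal.mul_rpow_of_nonneg _ _ hα,
      ENNReal.le_rpow_inv_iff hk, ENNReal.rpow_natCast]
    exact_mod_cast h t ht
  suffices (∑ t ∈ T, (a t : ℝ≥0∞)) ≤ ((P : ℝ≥0∞) * ∏ j ∈ s, ∑ t ∈ T, (c j t : ℝ≥0∞)) ^ α by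
    rw [ENNReal.le_rpow_inv_iff hk, ENNReal.rpow_natCast] at this
    exact_mod_cast this
  calc ∑ t ∈ T, (a t : ℝ≥0∞)
      ≤ ∑ t ∈ T, (P : ℝ≥0∞) ^ α * ∏ j ∈ s, (c j t : ℝ≥0∞) ^ α := sum_le_sum hterm
    _ = (P : ℝ≥0∞) ^ α * ∑ t ∈ T, ∏ j ∈ s, (c j t : ℝ≥0∞) ^ α := (mul_sum ..).symm
    _ ≤ (P : ℝ≥0∞) ^ α * ∏ j ∈ s, (∑ t ∈ T, (c j t : ℝ≥0∞)) ^ α := by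
      gcongr
      refine ENNReal.sum_prod_rpow_le_prod_sum_rpow s T _ ?_ fun _ _ => hα
      rw [sum_const, nsmul_eq_mul]
      exact mul_inv_cancel₀ hk.ne'
    _ = ((P : ℝ≥0∞) * ∏ j ∈ s, ∑ t ∈ T, (c j t : ℝ≥0∞)) ^ α := by
      rw [ENNReal.mul_rpow_of_nonneg _ _ hα, ← ENNReal.prod_rpow_of_nonneg hα]

theorem Real.rpow_sum_le_sum_rpow {ι : Type*} (s : Finset ι) {f : ι → ℝ} (hf : ∀ i ∈ s, 0 ≤ f i)
    {p : ℝ} (hp₀ : 0 < p) (hp₁ : p ≤ 1) :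
    (∑ i ∈ s, f i) ^ p ≤ ∑ i ∈ s, f i ^ p :=
  le_sum_of_subadditive_on_pred (· ^ p) (0 ≤ ·) (Real.zero_rpow hp₀.ne').le
    (fun _ _ hx hy => Real.rpow_add_le_add_rpow hx hy hp₀.le hp₁) (fun _ _ => add_nonneg) f hf

theorem Finset.sum_le_finsum {α M : Type*} [AddCommMonoid M] [PartialOrder M]
    [IsOrderedAddMonoid M] {f : α → M} (hf : HasFiniteSupport f) (hf₀ : 0 ≤ f) (s : Finset α) :
    ∑ a ∈ s, f a ≤ ∑ᶠ a, f a := by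
  classical
  rw [finsum_eq_sum_of_support_subset f (s := s ∪ hf.toFinset)
    fun _ ha => mem_coe.mpr (mem_union_right _ (hf.mem_toFinset.mpr ha))]
  exact sum_le_sum_of_subset_of_nonneg subset_union_left fun a _ _ => hf₀ a

theorem hasFiniteSupport_abs_sub_comp_add {G : Type*} [AddGroup G] {f : G → ℤ}
    (hf : HasFiniteSupport f) (v : G) : HasFiniteSupport fun u => |f u - f (u + v)| := by
  refine (hf.union (hf.preimage (add_left_injective v).injOn)).subset fun u hu => ?_
  by_contra hn
  simp only [Set.mem_union, Set.mem_preimage, mem_support, not_or, not_not] at hn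
  simp [hn.1, hn.2] at hu

theorem Function.HasFiniteSupport.exists_abs_le {α : Type*} {f : α → ℤ}
    (hf : HasFiniteSupport f) : ∃ M, ∀ u, |f u| ≤ M := by
  refine ⟨∑ v ∈ hf.toFinset, |f v|, fun u => ?_⟩
  by_cases hu : f u = 0
  · rw [hu, abs_zero]
    exact sum_nonneg fun _ _ => abs_nonneg _
  · exact single_le_sum (f := fun v => |f v|) (fun _ _ => abs_nonneg _) (hf.mem_toFinset.mpr hu)

section LoomisWhitney

variable {ι M : Type*}

theorem injOn_update_of_apply_eq [DecidableEq ι] {S : Set (ι → M)} {i : ι}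
    (hS : ∀ u ∈ S, ∀ v ∈ S, u i = v i) (c : M) : S.InjOn (update · i c) := by
  intro u hu v hv huv
  funext k
  by_cases hk : k = i
  · subst hk
    exact hS u hu v hv
  · simpa [update_of_ne hk] using congrFun huv k

theorem card_image_update_image_update_le [DecidableEq ι] [Zero M] [DecidableEq (ι → M)]
    (S : Finset (ι → M)) {i j : ι} (hij : i ≠ j) :
    #((S.image (update · i 0)).image (update · j 0)) ≤ #(S.image (update · j 0)) :=
  (card_image_le (f := (update · i 0))).trans_eq' <| by
    simp only [image_image, comp_def, update_comm hij]

theorem sum_card_image_filter_eq_card_image [DecidableEq M] [DecidableEq (ι → M)]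
    {f : (ι → M) → ι → M} {i : ι} (hf : ∀ u, f u i = u i) (A : Finset (ι → M)) :
    ∑ t ∈ A.image (· i), #({u ∈ A | u i = t}.image f) = #(A.image f) := by
  rw [card_eq_sum_card_fiberwise (f := (· i)) (t := A.image (· i))]
  · refine sum_congr rfl fun t _ => ?_
    simp only [filter_image, hf]
  · intro x hx
    obtain ⟨u, hu, rfl⟩ := mem_image.mp hx
    simpa [hf] using mem_image_of_mem (· i) hu

theorem card_pow_le_prod_card_image_update [DecidableEq ι] [Zero M] [DecidableEq M]
    [DecidableEq (ι → M)] (s : Finset ι) {A : Finset (ι → M)} (hA : A.Nonempty)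
    (hAs : ∀ u ∈ A, ∀ j ∉ s, u j = 0) :
    #A ^ (#s - 1) ≤ ∏ j ∈ s, #(A.image (update · j 0)) := by
  induction s using Finset.induction generalizing A with
  | empty => simp
  | @insert i s hi ih =>
    rw [prod_insert hi, card_insert_of_notMem hi, Nat.add_sub_cancel]
    rcases s.eq_empty_or_nonempty with rfl | hs
    · simpa using hA.image (update · i 0)
    set slice : M → Finset (ι → M) := fun t => {u ∈ A | u i = t}
    have hslice_inj : ∀ t, (slice t : Set (ι → M)).InjOn (update · i 0) := fun t =>
      injOn_update_of_apply_eq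
        (fun _ hu _ hv => (mem_filter.mp hu).2.trans (mem_filter.mp hv).2.symm) 0
    have hslice : ∀ t ∈ A.image (· i), #(slice t) ^ #s ≤
        #(A.image (update · i 0)) * ∏ j ∈ s, #((slice t).image (update · j 0)) := by
      rintro _ ht
      obtain ⟨u, hu, rfl⟩ := mem_image.mp ht
      rw [← Nat.sub_one_add_one hs.card_pos.ne', pow_succ']
      refine Nat.mul_le_mul (card_le_card_of_injOn _ (fun v hv => ?_) (hslice_inj _)) ?_
      · exact mem_image_of_mem _ (filter_subset _ _ hv)
      have hIH := ih (A := (slice (u i)).image (update · i 0))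
        (Nonempty.image (s := slice (u i)) ⟨u, mem_filter.mpr ⟨hu, rfl⟩⟩ _) fun v hv j hj => by
          obtain ⟨w, hw, rfl⟩ := mem_image.mp hv
          by_cases hji : j = i
          · simp [hji]
          · rw [update_of_ne hji]
            exact hAs w (mem_filter.mp hw).1 j (by simp [hji, hj])
      rw [card_image_of_injOn (hslice_inj _)] at hIH
      exact hIH.trans (prod_le_prod (fun _ _ => Nat.zero_le _) fun j hj =>
        card_image_update_image_update_le _ (by rintro rfl; exact hi hj))
    calc #A ^ #s = (∑ t ∈ A.image (· i), #(slice t)) ^ #s := by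
          rw [← card_eq_sum_card_fiberwise fun u hu => mem_image_of_mem _ hu]
      _ ≤ #(A.image (update · i 0)) *
            ∏ j ∈ s, ∑ t ∈ A.image (· i), #((slice t).image (update · j 0)) :=
          pow_card_sum_le_mul_prod_sum hs _ hslice
      _ = #(A.image (update · i 0)) * ∏ j ∈ s, #(A.image (update · j 0)) := by
          refine congrArg _ (prod_congr rfl fun j hj => ?_)
          exact sum_card_image_filter_eq_card_image
            (fun u => update_of_ne (by rintro rfl; exact hi hj) _ _) A

theorem card_mul_rpow_le_sum_card_image_update {ι M : Type*} [Fintype ι] [DecidableEq ι] [Zero M]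
    [DecidableEq M] [DecidableEq (ι → M)] {A : Finset (ι → M)} (hA : A.Nonempty) :
    (Fintype.card ι : ℝ) * (#A : ℝ) ^ (1 - 1 / (Fintype.card ι : ℝ)) ≤
      ∑ i, (#(A.image (update · i 0)) : ℝ) := by
  set n := Fintype.card ι
  rcases Nat.eq_zero_or_pos n with hn | hn
  · rw [hn, Nat.cast_zero, zero_mul]
    positivity
  have hn' : (0 : ℝ) < n := by exact_mod_cast hn
  have hLW : ((#A : ℝ) ^ (n - 1)) ≤ ∏ i, (#(A.image (update · i 0)) : ℝ) := by
    exact_mod_cast card_pow_le_prod_card_image_update univ hA (by simp)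
  have hAMGM := Real.geom_mean_le_arith_mean univ (fun _ => 1)
    (fun i => (#(A.image (update · i 0)) : ℝ)) (fun _ _ => zero_le_one) (by simpa using hn)
    (fun _ _ => Nat.cast_nonneg _)
  simp only [Real.rpow_one, one_mul, sum_const, card_univ, nsmul_eq_mul, mul_one] at hAMGM
  calc (n : ℝ) * (#A : ℝ) ^ (1 - 1 / (n : ℝ)) = n * ((#A : ℝ) ^ (n - 1)) ^ (n : ℝ)⁻¹ := by
        rw [← Real.rpow_natCast, ← Real.rpow_mul (Nat.cast_nonneg _), Nat.cast_pred hn]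
        field_simp
    _ ≤ n * (∏ i, (#(A.image (update · i 0)) : ℝ)) ^ (n : ℝ)⁻¹ := by gcongr
    _ ≤ n * ((∑ i, (#(A.image (update · i 0)) : ℝ)) / n) := by gcongr
    _ = ∑ i, (#(A.image (update · i 0)) : ℝ) := by field_simp

end LoomisWhitney

section Columns

variable {ι : Type*} [DecidableEq ι]

theorem update_add_single_self (u : ι → ℤ) (i : ι) (c : ℤ) :
    update (u + Pi.single i c) i 0 = update u i 0 := by
  funext k
  by_cases hk : k = i
  · simp [hk]
  · simp [hk, update_of_ne]

variable [DecidableEq (ι → ℤ)]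

theorem card_image_update_le_card_filter_add_single_notMem (A : Finset (ι → ℤ)) (i : ι) {c : ℤ}
    (hc : c ≠ 0) : #(A.image (update · i 0)) ≤ #{u ∈ A | u + Pi.single i c ∉ A} := by
  refine (card_le_card fun _ hw => ?_).trans (card_image_le (f := (update · i 0)))
  obtain ⟨u, hu, rfl⟩ := mem_image.mp hw
  -- the last point `w` of the column of `u` in direction `c` leaves `A`
  obtain ⟨w, hw, hmax⟩ := exists_max_image {v ∈ A | update v i 0 = update u i 0} (c * · i)
    ⟨u, mem_filter.mpr ⟨hu, rfl⟩⟩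
  rw [mem_filter] at hw
  refine mem_image.mpr ⟨w, mem_filter.mpr ⟨hw.1, fun hwc => ?_⟩, hw.2⟩
  have := hmax _ (mem_filter.mpr ⟨hwc, (update_add_single_self w i c).trans hw.2⟩)
  simp only [Pi.add_apply, Pi.single_eq_same, mul_add] at this
  nlinarith [mul_self_pos.mpr hc]

theorem two_mul_card_image_update_le_finsum (A : Finset (ι → ℤ)) (i : ι) :
    2 * (#(A.image (update · i 0)) : ℤ) ≤
      ∑ᶠ u, |(A : Set (ι → ℤ)).indicator 1 u -
        (A : Set (ι → ℤ)).indicator 1 (u + Pi.single i 1)| := by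
  set g : (ι → ℤ) → ℤ :=
    fun u => |(A : Set (ι → ℤ)).indicator 1 u - (A : Set (ι → ℤ)).indicator 1 (u + Pi.single i 1)|
  set top := {u ∈ A | u + Pi.single i 1 ∉ A}
  set bot := {u ∈ A | u + Pi.single i (-1) ∉ A}
  have hshift : ∀ u : ι → ℤ, u + Pi.single i (-1) + Pi.single i 1 = u := fun u => by
    rw [add_assoc, ← Pi.single_add, neg_add_cancel, Pi.single_zero, add_zero]
  have hg_top : ∀ u ∈ top, g u = 1 := fun u hu => by
    simp_all [g, top, Set.indicator_apply]
  have hg_bot : ∀ u ∈ bot, g (u + Pi.single i (-1)) = 1 := fun u hu => by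
    simp_all [g, bot, Set.indicator_apply]
  have hdisj : Disjoint top (bot.image (· + Pi.single i (-1))) := by
    refine disjoint_left.mpr fun u hu hu' => ?_
    obtain ⟨v, hv, rfl⟩ := mem_image.mp hu'
    exact (mem_filter.mp hv).2 (mem_filter.mp hu).1
  have hg : HasFiniteSupport g := hasFiniteSupport_abs_sub_comp_add
    (A.finite_toSet.subset (Set.support_indicator_subset)) _
  calc 2 * (#(A.image (update · i 0)) : ℤ) ≤ #top + #bot := by
        have htop : #(A.image (update · i 0)) ≤ #top :=
          card_image_update_le_card_filter_add_single_notMem A i one_ne_zero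
        have hbot : #(A.image (update · i 0)) ≤ #bot :=
          card_image_update_le_card_filter_add_single_notMem A i (neg_ne_zero.mpr one_ne_zero)
        omega
    _ = ∑ u ∈ top ∪ bot.image (· + Pi.single i (-1)), g u := by
        rw [sum_union hdisj, sum_image (add_left_injective _).injOn, sum_congr rfl hg_top,
          sum_congr rfl hg_bot]
        simp
    _ ≤ ∑ᶠ u, g u := sum_le_finsum hg (fun _ => abs_nonneg _) _

end Columns

section Layers

variable {α : Type*}

/-- For `t ≥ 0` this is `{u | t < f u}`, for `t < 0` it is `{u | f u ≤ t}`: the layers containing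
`u` are those with `t + 1/2` between `0` and `f u`, so there are `|f u|` of them. -/
def layer (f : α → ℤ) (t : ℤ) : Set α := {u | t < f u ↔ 0 ≤ t}

theorem layer_subset_support (f : α → ℤ) (t : ℤ) : layer f t ⊆ support f := fun u hu h0 => by
  simp only [layer, Set.mem_ofPred_eq, h0] at hu
  omega

theorem abs_indicator_layer_sub (f : α → ℤ) (t : ℤ) (u v : α) :
    |(layer f t).indicator (1 : α → ℤ) u - (layer f t).indicator (1 : α → ℤ) v| =
      if t ∈ Ico (min (f u) (f v)) (max (f u) (f v)) then 1 else 0 := by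
  simp only [Set.indicator_apply, layer, Set.mem_ofPred_eq, mem_Ico, Pi.one_apply]
  split_ifs <;> simp <;> omega

theorem indicator_layer_apply (f : α → ℤ) (t : ℤ) (u : α) :
    (layer f t).indicator (1 : α → ℤ) u = if t ∈ Ico (min (f u) 0) (max (f u) 0) then 1 else 0 := by
  simp only [Set.indicator_apply, layer, Set.mem_ofPred_eq, mem_Ico, Pi.one_apply]
  split_ifs <;> omega

theorem sum_ite_mem_Ico_min_max {M a b : ℤ} (ha : |a| ≤ M) (hb : |b| ≤ M) :
    ∑ t ∈ Ico (-M) M, (if t ∈ Ico (min a b) (max a b) then 1 else 0) = |a - b| := by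
  rw [sum_ite_mem, inter_eq_right.mpr, sum_const, Int.card_Ico, nsmul_one, Int.toNat_of_nonneg,
    max_sub_min_eq_abs']
  · exact sub_nonneg.mpr min_le_max
  · rw [abs_le] at ha hb
    exact Ico_subset_Ico (by omega) (by omega)

theorem sum_abs_indicator_layer_sub {f : α → ℤ} {M : ℤ} {u v : α} (hu : |f u| ≤ M)
    (hv : |f v| ≤ M) :
    ∑ t ∈ Ico (-M) M, |(layer f t).indicator (1 : α → ℤ) u - (layer f t).indicator (1 : α → ℤ) v| =
      |f u - f v| := by
  simp only [abs_indicator_layer_sub]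
  exact sum_ite_mem_Ico_min_max hu hv

theorem sum_indicator_layer {f : α → ℤ} {M : ℤ} {u : α} (hu : |f u| ≤ M) :
    ∑ t ∈ Ico (-M) M, (layer f t).indicator (1 : α → ℤ) u = |f u| := by
  simp only [indicator_layer_apply]
  simpa using sum_ite_mem_Ico_min_max hu (abs_zero.trans_le ((abs_nonneg _).trans hu))

theorem finsum_indicator_one_eq_ncard {s : Set α} (hs : s.Finite) :
    ∑ᶠ u, s.indicator (1 : α → ℤ) u = s.ncard := by
  obtain ⟨F, rfl⟩ := hs.exists_finset_coe
  rw [← finsum_mem_def, finsum_mem_coe_finset, Set.ncard_coe_finset]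
  simp

theorem finsum_abs_eq_sum_ncard_layer {f : α → ℤ} (hf : HasFiniteSupport f) {M : ℤ}
    (hM : ∀ u, |f u| ≤ M) : ∑ᶠ u, |f u| = ∑ t ∈ Ico (-M) M, ((layer f t).ncard : ℤ) := by
  have hfin : ∀ t, (layer f t).Finite := fun t => hf.subset (layer_subset_support f t)
  rw [finsum_congr fun u => (sum_indicator_layer (hM u)).symm,
    finsum_sum_comm _ _ fun t _ => (hfin t).subset Set.support_indicator_subset]
  exact sum_congr rfl fun t _ => finsum_indicator_one_eq_ncard (hfin t)

end Layers

theorem exists_eq_single_of_sum_abs_eq_one {ι : Type*} [Fintype ι] [DecidableEq ι] {w : ι → ℤ}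
    (h : ∑ j, |w j| = 1) : ∃ i, w = Pi.single i (w i) ∧ |w i| = 1 := by
  obtain ⟨i, hi⟩ : ∃ i, w i ≠ 0 := by
    by_contra! h0
    simp [h0] at h
  have hsplit := add_sum_erase univ (fun j => |w j|) (mem_univ i)
  have hrest_nonneg : 0 ≤ ∑ j ∈ univ.erase i, |w j| := sum_nonneg fun _ _ => abs_nonneg _
  have hwi : 0 < |w i| := abs_pos.mpr hi
  have hrest : ∀ j ∈ univ.erase i, |w j| = 0 :=
    (sum_eq_zero_iff_of_nonneg fun _ _ => abs_nonneg _).mp (by omega)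
  refine ⟨i, funext fun j => ?_, by omega⟩
  by_cases hj : j = i
  · subst hj
    simp
  · simpa [hj] using hrest j (by simp [hj])

namespace DF

variable {d : ℕ}

theorem baseAdj_add_single (u : Base d) (i : Fin d) : baseAdj u (u + Pi.single i 1) := by
  simp [baseAdj, dist1, Pi.single_apply, apply_ite]

theorem exists_eq_add_single_of_baseAdj {u v : Base d} (h : baseAdj u v) :
    ∃ i, v = u + Pi.single i 1 ∨ u = v + Pi.single i 1 := by
  obtain ⟨i, hw, hwi⟩ := exists_eq_single_of_sum_abs_eq_one (w := u - v) h
  refine ⟨i, ?_⟩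
  rcases abs_eq (zero_le_one' ℤ) |>.mp hwi with h1 | h1 <;> rw [h1] at hw
  · exact .inr (by rw [← hw]; abel)
  · refine .inl ?_
    calc v = u - (u - v) := by abel
      _ = u + Pi.single i 1 := by rw [hw, Pi.single_neg, sub_neg_eq_add]

theorem injective_sym2_mk_add_single :
    Injective fun q : Fin d × Base d => s(q.2, q.2 + Pi.single q.1 1) := by
  rintro ⟨i, u⟩ ⟨j, v⟩ h
  rcases Sym2.eq_iff.mp h with ⟨rfl, h2⟩ | ⟨h1, h2⟩
  · obtain rfl : i = j := by simpa [Pi.single_apply] using congrFun h2 i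
    rfl
  · dsimp only at h1 h2
    have := congrFun (show v + (Pi.single j 1 + Pi.single i 1) = v + 0 by
      rw [add_zero, ← add_assoc, ← h1, h2]) i
    simp only [Pi.add_apply, Pi.single_apply, Pi.zero_apply, add_zero] at this
    split_ifs at this <;> omega

theorem TV_eq_sum_finsum {τ : Base d → ℤ} (hτ : IsShift τ) :
    TV τ = ∑ i, ∑ᶠ u, |τ u - τ (u + Pi.single i 1)| := by
  have hbij : Set.BijOn (fun q : Fin d × Base d => s(q.2, q.2 + Pi.single q.1 1)) Set.univ
      {e | IsBaseEdge e} := by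
    refine ⟨fun q _ => ⟨_, _, baseAdj_add_single q.2 q.1, rfl⟩,
      injective_sym2_mk_add_single.injOn, ?_⟩
    rintro e ⟨u, v, huv, rfl⟩
    obtain ⟨i, rfl | rfl⟩ := exists_eq_add_single_of_baseAdj huv
    · exact ⟨(i, u), trivial, rfl⟩
    · exact ⟨(i, v), trivial, Sym2.eq_swap⟩
  have hfin : HasFiniteSupport fun q : Fin d × Base d => |τ q.2 - τ (q.2 + Pi.single q.1 1)| :=
    (Set.finite_univ.prod (Set.finite_iUnion fun i =>
      hasFiniteSupport_abs_sub_comp_add hτ (Pi.single i 1))).subset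
      fun q hq => ⟨trivial, Set.mem_iUnion.mpr ⟨q.1, hq⟩⟩
  rw [TV, ← finsum_mem_eq_of_bijOn (f := fun q => |τ q.2 - τ (q.2 + Pi.single q.1 1)|) _ hbij
    fun _ _ => rfl, finsum_mem_univ, finsum_curry _ hfin, finsum_eq_sum_of_fintype]


theorem one_sub_one_div_pos (hd : 2 ≤ d) : 0 < 1 - 1 / (d : ℝ) := by
  have : (2 : ℝ) ≤ d := by exact_mod_cast hd
  rw [sub_pos, div_lt_one (by linarith)]
  linarith

theorem TV_nonneg (τ : Base d → ℤ) : 0 ≤ TV τ :=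
  finsum_nonneg fun e => finsum_nonneg fun _ => Sym2.ind (fun _ _ => abs_nonneg _) e

theorem isoperimetric_inequality (hd : 2 ≤ d) {A : Set (Base d)} (hA : A.Finite) :
    2 * (d : ℝ) * (A.ncard : ℝ) ^ (1 - 1 / (d : ℝ)) ≤ TV (A.indicator 1) := by
  obtain ⟨F, rfl⟩ := hA.exists_finset_coe
  rw [Set.ncard_coe_finset]
  rcases F.eq_empty_or_nonempty with rfl | hF
  · rw [card_empty, Nat.cast_zero, Real.zero_rpow (one_sub_one_div_pos hd).ne', mul_zero]
    exact_mod_cast TV_nonneg _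
  have hLW := card_mul_rpow_le_sum_card_image_update hF
  rw [Fintype.card_fin] at hLW
  rw [TV_eq_sum_finsum (F.finite_toSet.subset Set.support_indicator_subset), Int.cast_sum]
  calc 2 * (d : ℝ) * (#F : ℝ) ^ (1 - 1 / (d : ℝ))
      ≤ 2 * ∑ i, (#(F.image (update · i 0)) : ℝ) := by
        rw [mul_assoc]
        gcongr
    _ = ∑ i, ((2 * #(F.image (update · i 0)) : ℤ) : ℝ) := by
        rw [mul_sum]
        push_cast
        rfl
    _ ≤ _ := sum_le_sum fun i _ => by exact_mod_cast two_mul_card_image_update_le_finsum F i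

theorem TV_eq_sum_TV_indicator_layer {τ : Base d → ℤ} (hτ : IsShift τ) {M : ℤ}
    (hM : ∀ u, |τ u| ≤ M) : TV τ = ∑ t ∈ Ico (-M) M, TV ((layer τ t).indicator 1) := by
  have hlayer : ∀ t, IsShift ((layer τ t).indicator 1) := fun t =>
    (hτ.subset (layer_subset_support τ t)).subset Set.support_indicator_subset
  rw [TV_eq_sum_finsum hτ, sum_congr rfl fun t _ => TV_eq_sum_finsum (hlayer t), sum_comm]
  refine sum_congr rfl fun i _ => ?_
  rw [← finsum_sum_comm _ _ fun t _ => hasFiniteSupport_abs_sub_comp_add (hlayer t) _]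
  exact finsum_congr fun u => (sum_abs_indicator_layer_sub (hM u) (hM _)).symm

end DF

/-- **Functional isoperimetric inequality on `ℤ^d`.** For every shift
`τ : ℤ^d → ℤ`, `TV(τ) ≥ 2d (Σ_u |τ(u)|)^{1−1/d}`. -/
theorem functional_isoperimetric_inequality
    (d : ℕ) (hd : 2 ≤ d) (τ : Base d → ℤ) (hτ : IsShift τ) :
    (2 * (d : ℝ)) * (∑ᶠ u : Base d, (|τ u| : ℝ)) ^ (1 - 1 / (d : ℝ)) ≤ (TV τ : ℝ) := by
  obtain ⟨M, hM⟩ := HasFiniteSupport.exists_abs_le hτ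
  have hmass : ∑ᶠ u, (|τ u| : ℝ) = ∑ t ∈ Ico (-M) M, ((layer τ t).ncard : ℝ) := by
    have habs : HasFiniteSupport fun u => |τ u| := hτ.subset fun _ hu => abs_ne_zero.mp hu
    have := congrArg (Int.castAddHom ℝ) (finsum_abs_eq_sum_ncard_layer hτ hM)
    rw [map_finsum _ habs] at this
    simpa using this
  rw [hmass, TV_eq_sum_TV_indicator_layer hτ hM, Int.cast_sum]
  calc 2 * (d : ℝ) * (∑ t ∈ Ico (-M) M, ((layer τ t).ncard : ℝ)) ^ (1 - 1 / (d : ℝ))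
      ≤ 2 * d * ∑ t ∈ Ico (-M) M, ((layer τ t).ncard : ℝ) ^ (1 - 1 / (d : ℝ)) := by
        gcongr
        exact Real.rpow_sum_le_sum_rpow _ (fun _ _ => Nat.cast_nonneg _) (one_sub_one_div_pos hd)
          (by simp)
    _ = ∑ t ∈ Ico (-M) M, 2 * d * ((layer τ t).ncard : ℝ) ^ (1 - 1 / (d : ℝ)) := mul_sum ..
    _ ≤ _ := sum_le_sum fun t _ =>
        isoperimetric_inequality hd (hτ.subset (layer_subset_support τ t))
end
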